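/- arXiv:2201.12869 — 4 statements merged into one kernel-verified Lean document; each statement's English description precedes it below -/
import Mathlib

section
/- In a simplified market with exactly four players in which every item is legal to at least two players and no item is legal to all four players, there exist a legal allocation O and a subset X_r ⊆ X that is a removable set of type I or a removable set of type II with respect to O. -/
set_option linter.unusedSectionVars false
set_option linter.unusedVariables false


open Finset

/-- A legal allocation of a simplified market: a partition of the items into bundles
`O i` with `|O i| = k i` and `O i ⊆ 𝓛 i` for every player `i`. -/
def LegalAlloc {X I : Type*} (k : I → ℕ) (L : I → Finset X) (O : I → Finset X) : Prop :=
  (∀ i, (O i).card = k i) ∧ (∀ x : X, ∃! i, x ∈ O i) ∧ (∀ i, O i ⊆ L i)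

/-- The edge relation of the legality graph `G(O)`: `x → y` iff some player `i`
has `x ∈ O i` and `y ∈ 𝓛 i ∖ O i`. -/
def LegalityEdge {X I : Type*} (L : I → Finset X) (O : I → Finset X) (x y : X) : Prop :=
  ∃ i, x ∈ O i ∧ y ∈ L i ∧ y ∉ O i

/-- There is a directed path from `x` to `y` in the subgraph of the legality graph
`G(O)` induced on the vertex set `Xr`. -/
def PathInduced {X I : Type*} (L : I → Finset X) (O : I → Finset X) (Xr : Finset X)
    (x y : X) : Prop :=
  ∃ (l : ℕ) (z : Fin (l + 1) → X),
    (∀ j, z j ∈ Xr) ∧ z 0 = x ∧ z (Fin.last l) = y ∧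
    ∀ j : Fin l, LegalityEdge L O (z j.castSucc) (z j.succ)

/-- `Xr` is a removable set of type I with central item `xc` with respect to the legal
allocation `O`. -/
def RemovableTypeI {X I : Type*} [Fintype I] [DecidableEq X] [DecidableEq I]
    (L : I → Finset X) (O : I → Finset X) (Xr : Finset X) (xc : X) : Prop :=
  ∃ ic : I, xc ∈ O ic ∧
    ∃ xsel : I → X,
      (∀ i, xc ∈ L i → i ≠ ic → xsel i ∈ O i ∧ xsel i ∈ L ic ∧ xsel i ≠ xc) ∧
      Xr = insert xc
        ((Finset.univ.filter (fun i : I => xc ∈ L i ∧ i ≠ ic)).image xsel)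

/-- `Xr` is a removable set of type II with respect to the legal allocation `O`. -/
def RemovableTypeII {X I : Type*} [Fintype I] [DecidableEq X]
    (L : I → Finset X) (O : I → Finset X) (Xr : Finset X) : Prop :=
  (∀ i, (O i ∩ Xr).card = 1) ∧
  (∀ x ∈ Xr, ∀ y ∈ Xr, PathInduced L O Xr x y)

section Helpers

variable {X I : Type*} [Fintype X] [DecidableEq X] [Fintype I] [DecidableEq I]

lemma owner_unique {k : I → ℕ} {L O : I → Finset X} (hO : LegalAlloc k L O)
    {u : X} {i j : I} (hi : u ∈ O i) (hj : u ∈ O j) : i = j :=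
  (hO.2.1 u).unique hi hj

lemma exists_fourth (hI : Fintype.card I = 4) {a b e : I}
    (hab : a ≠ b) (hae : a ≠ e) (hbe : b ≠ e) :
    ∃ w, w ≠ a ∧ w ≠ b ∧ w ≠ e ∧ ∀ i : I, i = a ∨ i = b ∨ i = e ∨ i = w := by
  have hcard : ({a, b, e} : Finset I).card = 3 := by
    rw [card_insert_of_notMem (by simp [hab, hae]),
      card_insert_of_notMem (by simp [hbe]), card_singleton]
  have h4 : (univ \ {a, b, e} : Finset I).card = 1 := by
    rw [card_sdiff_of_subset (subset_univ _), card_univ, hI, hcard]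
  obtain ⟨w, hw⟩ := card_eq_one.mp h4
  have hwmem : w ∈ univ \ ({a, b, e} : Finset I) := hw ▸ mem_singleton_self w
  rw [mem_sdiff, mem_insert, mem_insert, mem_singleton] at hwmem
  push_neg at hwmem
  refine ⟨w, hwmem.2.1, hwmem.2.2.1, hwmem.2.2.2, fun i => ?_⟩
  by_cases hi' : i = a ∨ i = b ∨ i = e
  · tauto
  · have : i ∈ univ \ ({a, b, e} : Finset I) := by
      rw [mem_sdiff, mem_insert, mem_insert, mem_singleton]; exact ⟨mem_univ _, by tauto⟩
    rw [hw, mem_singleton] at this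
    tauto

lemma path_refl (L O : I → Finset X) (Xr : Finset X) {x : X} (hx : x ∈ Xr) :
    PathInduced L O Xr x x :=
  ⟨0, fun _ => x, fun _ => hx, rfl, rfl, fun j => j.elim0⟩

lemma path_snoc {L O : I → Finset X} {Xr : Finset X} {x y v : X}
    (p : PathInduced L O Xr x y) (hv : v ∈ Xr) (e : LegalityEdge L O y v) :
    PathInduced L O Xr x v := by
  obtain ⟨l, z, hmem, h0, hlast, hedge⟩ := p
  refine ⟨l + 1, Fin.snoc z v, ?_, ?_, ?_, ?_⟩
  · intro j
    refine Fin.lastCases ?_ ?_ j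
    · rw [Fin.snoc_last]; exact hv
    · intro i; rw [Fin.snoc_castSucc]; exact hmem i
  · have : ((0 : Fin (l + 2))) = Fin.castSucc 0 := rfl
    rw [this, Fin.snoc_castSucc]; exact h0
  · rw [Fin.snoc_last]
  · intro j
    refine Fin.lastCases ?_ ?_ j
    · rw [Fin.succ_last, Fin.snoc_last, Fin.snoc_castSucc, hlast]
      exact e
    · intro i
      rw [Fin.succ_castSucc, Fin.snoc_castSucc, Fin.snoc_castSucc]
      exact hedge i

lemma path_of_rtg {L O : I → Finset X} {Xr : Finset X} {x y : X} (hx : x ∈ Xr)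
    (h : Relation.ReflTransGen (fun u v => v ∈ Xr ∧ LegalityEdge L O u v) x y) :
    PathInduced L O Xr x y := by
  induction h with
  | refl => exact path_refl L O Xr hx
  | tail _ hbc ih => exact path_snoc ih hbc.1 hbc.2

lemma typeII_core {k : I → ℕ} {L O : I → Finset X} (hO : LegalAlloc k L O)
    {A B C D : I} (hAB : A ≠ B) (hAC : A ≠ C) (hAD : A ≠ D) (hBC : B ≠ C)
    (hBD : B ≠ D) (hCD : C ≠ D) (hex : ∀ i : I, i = A ∨ i = B ∨ i = C ∨ i = D)
    {r0 r1 r2 r3 : X} (h0 : r0 ∈ O A) (h1 : r1 ∈ O B) (h2 : r2 ∈ O C) (h3 : r3 ∈ O D)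
    (hpath : ∀ u ∈ ({r0, r1, r2, r3} : Finset X), ∀ v ∈ ({r0, r1, r2, r3} : Finset X),
      PathInduced L O {r0, r1, r2, r3} u v) :
    RemovableTypeII L O {r0, r1, r2, r3} := by
  constructor
  · have eA : O A ∩ ({r0, r1, r2, r3} : Finset X) = {r0} := by
      ext u
      simp only [mem_inter, mem_insert, mem_singleton]
      constructor
      · rintro ⟨hu, rfl | rfl | rfl | rfl⟩
        · rfl
        · exact absurd (owner_unique hO hu h1) hAB
        · exact absurd (owner_unique hO hu h2) hAC
        · exact absurd (owner_unique hO hu h3) hAD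
      · rintro rfl; exact ⟨h0, Or.inl rfl⟩
    have eB : O B ∩ ({r0, r1, r2, r3} : Finset X) = {r1} := by
      ext u
      simp only [mem_inter, mem_insert, mem_singleton]
      constructor
      · rintro ⟨hu, rfl | rfl | rfl | rfl⟩
        · exact absurd (owner_unique hO hu h0) (Ne.symm hAB)
        · rfl
        · exact absurd (owner_unique hO hu h2) hBC
        · exact absurd (owner_unique hO hu h3) hBD
      · rintro rfl; exact ⟨h1, Or.inr (Or.inl rfl)⟩
    have eC : O C ∩ ({r0, r1, r2, r3} : Finset X) = {r2} := by
      ext u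
      simp only [mem_inter, mem_insert, mem_singleton]
      constructor
      · rintro ⟨hu, rfl | rfl | rfl | rfl⟩
        · exact absurd (owner_unique hO hu h0) (Ne.symm hAC)
        · exact absurd (owner_unique hO hu h1) (Ne.symm hBC)
        · rfl
        · exact absurd (owner_unique hO hu h3) hCD
      · rintro rfl; exact ⟨h2, Or.inr (Or.inr (Or.inl rfl))⟩
    have eD : O D ∩ ({r0, r1, r2, r3} : Finset X) = {r3} := by
      ext u
      simp only [mem_inter, mem_insert, mem_singleton]
      constructor
      · rintro ⟨hu, rfl | rfl | rfl | rfl⟩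
        · exact absurd (owner_unique hO hu h0) (Ne.symm hAD)
        · exact absurd (owner_unique hO hu h1) (Ne.symm hBD)
        · exact absurd (owner_unique hO hu h2) (Ne.symm hCD)
        · rfl
      · rintro rfl; exact ⟨h3, Or.inr (Or.inr (Or.inr rfl))⟩
    intro i
    rcases hex i with h | h | h | h <;> rw [h]
    · rw [eA, card_singleton]
    · rw [eB, card_singleton]
    · rw [eC, card_singleton]
    · rw [eD, card_singleton]
  · exact hpath

lemma typeII_of_cycle4 {k : I → ℕ} {L O : I → Finset X} (hO : LegalAlloc k L O)
    {A B C D : I} (hAB : A ≠ B) (hAC : A ≠ C) (hAD : A ≠ D) (hBC : B ≠ C)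
    (hBD : B ≠ D) (hCD : C ≠ D) (hex : ∀ i : I, i = A ∨ i = B ∨ i = C ∨ i = D)
    {r0 r1 r2 r3 : X} (h0 : r0 ∈ O A) (h1 : r1 ∈ O B) (h2 : r2 ∈ O C) (h3 : r3 ∈ O D)
    (e01 : LegalityEdge L O r0 r1) (e12 : LegalityEdge L O r1 r2)
    (e23 : LegalityEdge L O r2 r3) (e30 : LegalityEdge L O r3 r0) :
    RemovableTypeII L O {r0, r1, r2, r3} := by
  refine typeII_core hO hAB hAC hAD hBC hBD hCD hex h0 h1 h2 h3 ?_
  set Xr : Finset X := {r0, r1, r2, r3} with hXr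
  have m0 : r0 ∈ Xr := by simp [hXr]
  have m1 : r1 ∈ Xr := by simp [hXr]
  have m2 : r2 ∈ Xr := by simp [hXr]
  have m3 : r3 ∈ Xr := by simp [hXr]
  set R : X → X → Prop := fun u v => v ∈ Xr ∧ LegalityEdge L O u v with hR
  have s01 : Relation.ReflTransGen R r0 r1 := Relation.ReflTransGen.single ⟨m1, e01⟩
  have s12 : Relation.ReflTransGen R r1 r2 := Relation.ReflTransGen.single ⟨m2, e12⟩
  have s23 : Relation.ReflTransGen R r2 r3 := Relation.ReflTransGen.single ⟨m3, e23⟩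
  have s30 : Relation.ReflTransGen R r3 r0 := Relation.ReflTransGen.single ⟨m0, e30⟩
  intro u hu v hv
  have hu' := hu
  rw [hXr, mem_insert, mem_insert, mem_insert, mem_singleton] at hu hv
  refine path_of_rtg hu' ?_
  rcases hu with rfl | rfl | rfl | rfl <;> rcases hv with rfl | rfl | rfl | rfl <;>
    first
      | exact Relation.ReflTransGen.refl
      | exact s01 | exact s12 | exact s23 | exact s30
      | exact s01.trans s12 | exact s12.trans s23 | exact s23.trans s30
      | exact s30.trans s01
      | exact (s01.trans s12).trans s23 | exact (s12.trans s23).trans s30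
      | exact (s23.trans s30).trans s01 | exact (s30.trans s01).trans s12

lemma typeII_of_tri {k : I → ℕ} {L O : I → Finset X} (hO : LegalAlloc k L O)
    {A B C W : I} (hAB : A ≠ B) (hAC : A ≠ C) (hAW : A ≠ W) (hBC : B ≠ C)
    (hBW : B ≠ W) (hCW : C ≠ W) (hex : ∀ i : I, i = A ∨ i = B ∨ i = C ∨ i = W)
    {ra rb rc y : X} (ha : ra ∈ O A) (hb : rb ∈ O B) (hc : rc ∈ O C) (hy : y ∈ O W)
    (eab : LegalityEdge L O ra rb) (ebc : LegalityEdge L O rb rc)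
    (eca : LegalityEdge L O rc ra)
    (hyout : ∃ c', (c' = ra ∨ c' = rb ∨ c' = rc) ∧ LegalityEdge L O y c')
    (hyin : ∃ p', (p' = ra ∨ p' = rb ∨ p' = rc) ∧ LegalityEdge L O p' y) :
    RemovableTypeII L O {ra, rb, rc, y} := by
  refine typeII_core hO hAB hAC hAW hBC hBW hCW hex ha hb hc hy ?_
  set Xr : Finset X := {ra, rb, rc, y} with hXr
  have ma : ra ∈ Xr := by simp [hXr]
  have mb : rb ∈ Xr := by simp [hXr]
  have mc : rc ∈ Xr := by simp [hXr]
  have my : y ∈ Xr := by simp [hXr]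
  set R : X → X → Prop := fun u v => v ∈ Xr ∧ LegalityEdge L O u v with hR
  have sab : Relation.ReflTransGen R ra rb := Relation.ReflTransGen.single ⟨mb, eab⟩
  have sbc : Relation.ReflTransGen R rb rc := Relation.ReflTransGen.single ⟨mc, ebc⟩
  have sca : Relation.ReflTransGen R rc ra := Relation.ReflTransGen.single ⟨ma, eca⟩
  have tri : ∀ u, (u = ra ∨ u = rb ∨ u = rc) → ∀ v, (v = ra ∨ v = rb ∨ v = rc) →
      Relation.ReflTransGen R u v := by
    rintro u (rfl | rfl | rfl) v (rfl | rfl | rfl) <;>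
      first
        | exact Relation.ReflTransGen.refl
        | exact sab | exact sbc | exact sca
        | exact sab.trans sbc | exact sbc.trans sca | exact sca.trans sab
  obtain ⟨c', hc', ec'⟩ := hyout
  obtain ⟨p', hp', ep'⟩ := hyin
  have syc : Relation.ReflTransGen R y c' := Relation.ReflTransGen.single
    ⟨by rcases hc' with rfl | rfl | rfl <;> assumption, ec'⟩
  have spy : Relation.ReflTransGen R p' y := Relation.ReflTransGen.single ⟨my, ep'⟩
  intro u hu v hv
  have hu' := hu
  rw [hXr, mem_insert, mem_insert, mem_insert, mem_singleton] at hu hv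
  refine path_of_rtg hu' ?_
  have fromy : ∀ v', (v' = ra ∨ v' = rb ∨ v' = rc) → Relation.ReflTransGen R y v' :=
    fun v' hv' => syc.trans (tri c' hc' v' hv')
  have toy : ∀ u', (u' = ra ∨ u' = rb ∨ u' = rc) → Relation.ReflTransGen R u' y :=
    fun u' hu'' => (tri u' hu'' p' hp').trans spy
  rcases hu with hu | hu | hu | rfl
  · rcases hv with hv | hv | hv | rfl
    · exact tri u (Or.inl hu) v (Or.inl hv)
    · exact tri u (Or.inl hu) v (Or.inr (Or.inl hv))
    · exact tri u (Or.inl hu) v (Or.inr (Or.inr hv))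
    · exact toy u (Or.inl hu)
  · rcases hv with hv | hv | hv | rfl
    · exact tri u (Or.inr (Or.inl hu)) v (Or.inl hv)
    · exact tri u (Or.inr (Or.inl hu)) v (Or.inr (Or.inl hv))
    · exact tri u (Or.inr (Or.inl hu)) v (Or.inr (Or.inr hv))
    · exact toy u (Or.inr (Or.inl hu))
  · rcases hv with hv | hv | hv | rfl
    · exact tri u (Or.inr (Or.inr hu)) v (Or.inl hv)
    · exact tri u (Or.inr (Or.inr hu)) v (Or.inr (Or.inl hv))
    · exact tri u (Or.inr (Or.inr hu)) v (Or.inr (Or.inr hv))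
    · exact toy u (Or.inr (Or.inr hu))
  · rcases hv with hv | hv | hv | rfl
    · exact fromy v (Or.inl hv)
    · exact fromy v (Or.inr (Or.inl hv))
    · exact fromy v (Or.inr (Or.inr hv))
    · exact Relation.ReflTransGen.refl


lemma swap_cycle {k : I → ℕ} {L O : I → Finset X}
    (hO : LegalAlloc k L O) (hI : Fintype.card I = 4)
    (htight : ∀ i, ∀ x ∈ L i, ∃ O' : I → Finset X, LegalAlloc k L O' ∧ x ∈ O' i)
    {a b : I} {x : X} (hx : x ∈ O a) (hxb : x ∈ L b) (hab : b ≠ a) :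
    (∃ z1 ∈ O b, z1 ∈ L a) ∨
    (∃ e, e ≠ a ∧ e ≠ b ∧ (∃ z1 ∈ O b, z1 ∈ L e) ∧ (∃ z2 ∈ O e, z2 ∈ L a)) ∨
    (∃ e f, e ≠ a ∧ e ≠ b ∧ f ≠ a ∧ f ≠ b ∧ f ≠ e ∧
      (∃ z1 ∈ O b, z1 ∈ L e) ∧ (∃ z2 ∈ O e, z2 ∈ L f) ∧ (∃ z3 ∈ O f, z3 ∈ L a)) := by
  classical
  set S : Finset (I → Finset X) :=
    Finset.univ.filter (fun O' => LegalAlloc k L O' ∧ x ∈ O' b) with hSdef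
  have hSne : S.Nonempty := by
    obtain ⟨O', h1, h2⟩ := htight b x hxb
    exact ⟨O', by simp only [hSdef, mem_filter, mem_univ, true_and]; exact ⟨h1, h2⟩⟩
  obtain ⟨O', hO'S, hmin⟩ := Finset.exists_min_image S (fun Oc => ∑ i, (O i \ Oc i).card) hSne
  rw [hSdef, mem_filter] at hO'S
  obtain ⟨-, hO', hxb'⟩ := hO'S
  -- one step of the walk
  have hstep : ∀ i : I, (O' i \ O i).Nonempty →
      ∃ p : I × X, p.2 ∈ O i ∧ p.2 ∉ O' i ∧ p.2 ∈ O' p.1 ∧ p.1 ≠ i := by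
    intro i hne
    have hcards : (O i).card = (O' i).card := by rw [hO.1 i, hO'.1 i]
    have hne' : (O i \ O' i).Nonempty := by
      rw [Finset.sdiff_nonempty]
      intro hsub
      have : O i = O' i := Finset.eq_of_subset_of_card_le hsub (le_of_eq hcards.symm)
      rw [this] at hne
      simp at hne
    obtain ⟨u, hu⟩ := hne'
    rw [mem_sdiff] at hu
    obtain ⟨j, hj⟩ := (hO'.2.1 u).exists
    exact ⟨(j, u), hu.1, hu.2, hj, fun h => hu.2 (h ▸ hj)⟩
  let next : I → I × X := fun i =>
    if h : (O' i \ O i).Nonempty then (hstep i h).choose else (i, x)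
  let f : ℕ → I × X := fun n => Nat.rec (b, x) (fun _ p => next p.1) n
  set v : ℕ → I := fun n => (f n).1 with hvdef
  set y : ℕ → X := fun n => (f n).2 with hydef
  have hv0 : v 0 = b := rfl
  have hfsucc : ∀ t, f (t + 1) = next (v t) := fun t => rfl
  have hxOb : x ∉ O b := fun h => hab (owner_unique hO h hx)
  have key : ∀ t, (O' (v t) \ O (v t)).Nonempty →
      y (t + 1) ∈ O (v t) ∧ y (t + 1) ∉ O' (v t) ∧ y (t + 1) ∈ O' (v (t + 1)) ∧
        v (t + 1) ≠ v t := by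
    intro t hne
    have hnext : next (v t) = (hstep (v t) hne).choose := dif_pos hne
    have hspec := (hstep (v t) hne).choose_spec
    have h1 : y (t + 1) = ((hstep (v t) hne).choose).2 := by
      show (f (t + 1)).2 = _; rw [hfsucc, hnext]
    have h2 : v (t + 1) = ((hstep (v t) hne).choose).1 := by
      show (f (t + 1)).1 = _; rw [hfsucc, hnext]
    rw [h1, h2]
    exact ⟨hspec.1, hspec.2.1, hspec.2.2.1, hspec.2.2.2⟩
  have hneall : ∀ t, (O' (v t) \ O (v t)).Nonempty := by
    intro t
    induction t with
    | zero => exact ⟨x, mem_sdiff.mpr ⟨by rw [hv0]; exact hxb', by rw [hv0]; exact hxOb⟩⟩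
    | succ t ih =>
      obtain ⟨k1, k2, k3, k4⟩ := key t ih
      refine ⟨y (t + 1), mem_sdiff.mpr ⟨k3, fun h => k4 (owner_unique hO h k1)⟩⟩
  have hwalk : ∀ t, y (t + 1) ∈ O (v t) ∧ y (t + 1) ∉ O' (v t) ∧
      y (t + 1) ∈ O' (v (t + 1)) ∧ v (t + 1) ≠ v t := fun t => key t (hneall t)
  have hcons : ∀ t, v (t + 1) ≠ v t := fun t => (hwalk t).2.2.2
  -- pigeonhole: a repetition exists
  have hrepex : ∃ n, ∃ s, s < n ∧ v s = v n := by
    obtain ⟨s, t, hst, he⟩ := Fintype.exists_ne_map_eq_of_card_lt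
      (fun n : Fin 5 => v n) (by simp [hI])
    have hst' : (s : ℕ) ≠ (t : ℕ) := fun h => hst (Fin.ext h)
    rcases Nat.lt_or_ge (s : ℕ) (t : ℕ) with h | h
    · exact ⟨t, s, h, he⟩
    · exact ⟨s, t, lt_of_le_of_ne h (Ne.symm hst'), he.symm⟩
  set T : ℕ := Nat.find hrepex with hTdef
  obtain ⟨s0, hs0, hvs0⟩ := Nat.find_spec hrepex
  have hTmin : ∀ m, m < T → ¬∃ s, s < m ∧ v s = v m := fun m hm => Nat.find_min hrepex hm
  have hinj : ∀ i j : ℕ, i < j → j < T → v i ≠ v j :=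
    fun i j hij hjT he => hTmin j hjT ⟨i, hij, he⟩
  have hT2 : s0 + 2 ≤ T := by
    have hne : T ≠ s0 + 1 := fun h => hcons s0 (by rw [← h]; exact hvs0.symm)
    omega
  have hyfact : ∀ j, s0 < j → j ≤ T →
      y j ∈ O (v (j - 1)) ∧ y j ∉ O' (v (j - 1)) ∧ y j ∈ O' (v j) := by
    intro j h1 h2
    obtain ⟨t, rfl⟩ : ∃ t, j = t + 1 := ⟨j - 1, by omega⟩
    have e : t + 1 - 1 = t := rfl
    rw [e]
    exact ⟨(hwalk t).1, (hwalk t).2.1, (hwalk t).2.2.1⟩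
  have hvinj : ∀ i j : ℕ, s0 < i → i ≤ T → s0 < j → j ≤ T → v i = v j → i = j := by
    intro i j hi1 hi2 hj1 hj2 he
    rcases Nat.lt_trichotomy i j with h | h | h
    · rcases Nat.lt_or_ge j T with hj | hj
      · exact absurd he (hinj i j h hj)
      · have hjT : j = T := le_antisymm hj2 hj
        rcases Nat.lt_or_ge i T with hi | hi
        · have h1' : v j = v T := by rw [hjT]
          exact absurd (hvs0.trans (h1'.symm.trans he.symm)) (hinj s0 i hi1 hi)
        · omega
    · exact h
    · rcases Nat.lt_or_ge i T with hi | hi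
      · exact absurd he.symm (hinj j i h hi)
      · have hiT : i = T := le_antisymm hi2 hi
        rcases Nat.lt_or_ge j T with hj | hj
        · have h1' : v i = v T := by rw [hiT]
          exact absurd (hvs0.trans (h1'.symm.trans he)) (hinj s0 j hj1 hj)
        · omega
  set nxt : ℕ → ℕ := fun j => if j = T then s0 + 1 else j + 1 with hnxtdef
  have hnxt1 : ∀ j, s0 < j → j ≤ T →
      s0 < nxt j ∧ nxt j ≤ T ∧ nxt j ≠ j ∧ v (nxt j - 1) = v j := by
    intro j h1 h2
    by_cases h : j = T
    · have e : nxt j = s0 + 1 := by rw [hnxtdef]; simp [h]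
      refine ⟨by omega, by omega, by omega, ?_⟩
      rw [e]
      have e2 : s0 + 1 - 1 = s0 := rfl
      rw [e2, hvs0, h]
    · have e : nxt j = j + 1 := by rw [hnxtdef]; simp [h]
      refine ⟨by omega, by omega, by omega, ?_⟩
      rw [e]
      rfl
  set Y : Finset X := (Finset.Ioc s0 T).image y with hYdef
  have hYiff : ∀ u : X, u ∈ Y ↔ ∃ j, (s0 < j ∧ j ≤ T) ∧ y j = u := by
    intro u
    simp [hYdef, Finset.mem_image, Finset.mem_Ioc, and_assoc]
  by_cases hxY : x ∈ Y
  · -- the cycle passes through x : extract the data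
    obtain ⟨j0, ⟨hj01, hj02⟩, hyj0⟩ := (hYiff x).mp hxY
    have hvj0 : v j0 = b := owner_unique hO' (hyj0 ▸ (hyfact j0 hj01 hj02).2.2) hxb'
    have hvj0' : v (j0 - 1) = a := owner_unique hO (hyj0 ▸ (hyfact j0 hj01 hj02).1) hx
    obtain ⟨hj1a, hj1b, hj1ne, hj1v⟩ := hnxt1 j0 hj01 hj02
    have hz1f := hyfact (nxt j0) hj1a hj1b
    have hz1O : y (nxt j0) ∈ O b := by rw [← hvj0, ← hj1v]; exact hz1f.1
    have hz1L : y (nxt j0) ∈ L (v (nxt j0)) := hO'.2.2 _ hz1f.2.2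
    have he1b : v (nxt j0) ≠ b := by
      intro h
      exact hj1ne (hvinj _ _ hj1a hj1b hj01 hj02 (h.trans hvj0.symm))
    by_cases he1a : v (nxt j0) = a
    · exact Or.inl ⟨y (nxt j0), hz1O, he1a ▸ hz1L⟩
    · obtain ⟨hj2a, hj2b, hj2ne, hj2v⟩ := hnxt1 (nxt j0) hj1a hj1b
      have hz2f := hyfact (nxt (nxt j0)) hj2a hj2b
      have hz2O : y (nxt (nxt j0)) ∈ O (v (nxt j0)) := by rw [← hj2v]; exact hz2f.1
      have hz2L : y (nxt (nxt j0)) ∈ L (v (nxt (nxt j0))) := hO'.2.2 _ hz2f.2.2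
      have hj2ne0 : nxt (nxt j0) ≠ j0 := by
        intro h
        apply he1a
        have := hz2O
        rw [h, hyj0] at this
        exact owner_unique hO this hx
      have hf1e : v (nxt (nxt j0)) ≠ v (nxt j0) := by
        intro h
        exact hj2ne (hvinj _ _ hj2a hj2b hj1a hj1b h)
      have hf1b : v (nxt (nxt j0)) ≠ b := by
        intro h
        exact hj2ne0 (hvinj _ _ hj2a hj2b hj01 hj02 (h.trans hvj0.symm))
      by_cases hf1a : v (nxt (nxt j0)) = a
      · exact Or.inr (Or.inl ⟨v (nxt j0), he1a, he1b, ⟨y (nxt j0), hz1O, hz1L⟩,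
          ⟨y (nxt (nxt j0)), hz2O, hf1a ▸ hz2L⟩⟩)
      · obtain ⟨hj3a, hj3b, hj3ne, hj3v⟩ := hnxt1 (nxt (nxt j0)) hj2a hj2b
        have hz3f := hyfact (nxt (nxt (nxt j0))) hj3a hj3b
        have hz3O : y (nxt (nxt (nxt j0))) ∈ O (v (nxt (nxt j0))) := by
          rw [← hj3v]; exact hz3f.1
        have hz3L : y (nxt (nxt (nxt j0))) ∈ L (v (nxt (nxt (nxt j0)))) := hO'.2.2 _ hz3f.2.2
        have hj3ne0 : nxt (nxt (nxt j0)) ≠ j0 := by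
          intro h
          apply hf1a
          have := hz3O
          rw [h, hyj0] at this
          exact owner_unique hO this hx
        have hj3ne1 : nxt (nxt (nxt j0)) ≠ nxt j0 := by
          intro h
          apply hf1b
          have := hz3O
          rw [h] at this
          exact owner_unique hO this hz1O
        have hg_f : v (nxt (nxt (nxt j0))) ≠ v (nxt (nxt j0)) := by
          intro h
          exact hj3ne (hvinj _ _ hj3a hj3b hj2a hj2b h)
        have hg_e : v (nxt (nxt (nxt j0))) ≠ v (nxt j0) := by
          intro h
          exact hj3ne1 (hvinj _ _ hj3a hj3b hj1a hj1b h)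
        have hg_b : v (nxt (nxt (nxt j0))) ≠ b := by
          intro h
          exact hj3ne0 (hvinj _ _ hj3a hj3b hj01 hj02 (h.trans hvj0.symm))
        have hga : v (nxt (nxt (nxt j0))) = a := by
          obtain ⟨w, hw1, hw2, hw3, hwex⟩ := exists_fourth hI
            (Ne.symm he1b) (Ne.symm hf1b) (Ne.symm hf1e)
          have ha' : a = w := by
            rcases hwex a with h | h | h | h
            · exact absurd h.symm hab
            · exact absurd h.symm he1a
            · exact absurd h.symm hf1a
            · exact h
          have hg' : v (nxt (nxt (nxt j0))) = w := by
            rcases hwex (v (nxt (nxt (nxt j0)))) with h | h | h | h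
            · exact absurd h hg_b
            · exact absurd h hg_e
            · exact absurd h hg_f
            · exact h
          rw [hg', ha']
        exact Or.inr (Or.inr ⟨v (nxt j0), v (nxt (nxt j0)), he1a, he1b, hf1a, hf1b, hf1e,
          ⟨y (nxt j0), hz1O, hz1L⟩, ⟨y (nxt (nxt j0)), hz2O, hz2L⟩,
          ⟨y (nxt (nxt (nxt j0))), hz3O, hga ▸ hz3L⟩⟩)
  · -- undo the cycle: contradiction with minimality
    exfalso
    set O'' : I → Finset X := fun i => (O' i \ Y) ∪ (O i ∩ Y) with hO''def
    have hm'' : ∀ (u : X) (i : I), u ∈ O'' i ↔ ((u ∈ O' i ∧ u ∉ Y) ∨ (u ∈ O i ∧ u ∈ Y)) := by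
      intro u i
      simp [hO''def, mem_union, mem_sdiff, mem_inter]
    have claim1 : ∀ i, (O' i ∩ Y).card = (O i ∩ Y).card := by
      intro i
      by_cases hi : ∃ j, (s0 < j ∧ j ≤ T) ∧ v j = i
      · obtain ⟨j, ⟨hj1, hj2⟩, hvj⟩ := hi
        obtain ⟨hn1, hn2, hnne, hnv⟩ := hnxt1 j hj1 hj2
        have e1 : O' i ∩ Y = {y j} := by
          ext u
          simp only [mem_inter, mem_singleton]
          constructor
          · rintro ⟨hu1, hu2⟩
            obtain ⟨j', ⟨h1', h2'⟩, rfl⟩ := (hYiff u).mp hu2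
            have hj' : v j' = i := owner_unique hO' (hyfact j' h1' h2').2.2 hu1
            rw [hvinj j' j h1' h2' hj1 hj2 (hj'.trans hvj.symm)]
          · rintro rfl
            exact ⟨hvj ▸ (hyfact j hj1 hj2).2.2, (hYiff _).mpr ⟨j, ⟨hj1, hj2⟩, rfl⟩⟩
        have e2 : O i ∩ Y = {y (nxt j)} := by
          ext u
          simp only [mem_inter, mem_singleton]
          constructor
          · rintro ⟨hu1, hu2⟩
            obtain ⟨j', ⟨h1', h2'⟩, rfl⟩ := (hYiff u).mp hu2
            have hOown : v (j' - 1) = i := owner_unique hO (hyfact j' h1' h2').1 hu1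
            by_cases hj's : j' - 1 = s0
            · have hvT : v j = v T := by
                rw [← hvs0, ← hj's]
                exact hvj.trans hOown.symm
              have hjT : j = T := hvinj j T hj1 hj2 (by omega) le_rfl hvT
              have hns : nxt j = s0 + 1 := by rw [hnxtdef]; simp [hjT]
              have hj'e : j' = s0 + 1 := by omega
              rw [hns, hj'e]
            · have hj'j : j' - 1 = j :=
                hvinj (j' - 1) j (by omega) (by omega) hj1 hj2 (hOown.trans hvj.symm)
              have hjltT : j ≠ T := by omega
              have hns : nxt j = j + 1 := by rw [hnxtdef]; simp [hjltT]
              have hj'e : j' = j + 1 := by omega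
              rw [hns, hj'e]
          · rintro rfl
            refine ⟨?_, (hYiff _).mpr ⟨nxt j, ⟨hn1, hn2⟩, rfl⟩⟩
            have := (hyfact (nxt j) hn1 hn2).1
            rw [hnv, hvj] at this
            exact this
        rw [e1, e2, card_singleton, card_singleton]
      · have e1 : O' i ∩ Y = ∅ := by
          rw [Finset.eq_empty_iff_forall_notMem]
          intro u hu
          rw [mem_inter] at hu
          obtain ⟨j', ⟨h1', h2'⟩, rfl⟩ := (hYiff u).mp hu.2
          exact hi ⟨j', ⟨h1', h2'⟩, owner_unique hO' (hyfact j' h1' h2').2.2 hu.1⟩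
        have e2 : O i ∩ Y = ∅ := by
          rw [Finset.eq_empty_iff_forall_notMem]
          intro u hu
          rw [mem_inter] at hu
          obtain ⟨j', ⟨h1', h2'⟩, rfl⟩ := (hYiff u).mp hu.2
          have hOown : v (j' - 1) = i := owner_unique hO (hyfact j' h1' h2').1 hu.1
          by_cases hj's : j' - 1 = s0
          · exact hi ⟨T, ⟨by omega, le_rfl⟩, by rw [← hvs0, ← hj's]; exact hOown⟩
          · exact hi ⟨j' - 1, ⟨by omega, by omega⟩, hOown⟩
        rw [e1, e2]
    have halloc'' : LegalAlloc k L O'' := by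
      refine ⟨?_, ?_, ?_⟩
      · intro i
        have hdisj : Disjoint (O' i \ Y) (O i ∩ Y) := by
          rw [Finset.disjoint_left]
          intro u hu1 hu2
          exact (mem_sdiff.mp hu1).2 (mem_inter.mp hu2).2
        have : O'' i = (O' i \ Y) ∪ (O i ∩ Y) := rfl
        rw [this, card_union_of_disjoint hdisj, ← claim1 i,
          Finset.card_sdiff_add_card_inter]
        exact hO'.1 i
      · intro u
        by_cases huY : u ∈ Y
        · obtain ⟨i0, hi0, hi0u⟩ := hO.2.1 u
          refine ⟨i0, (hm'' u i0).mpr (Or.inr ⟨hi0, huY⟩), ?_⟩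
          intro j hj
          rcases (hm'' u j).mp hj with ⟨_, hn⟩ | ⟨hj', _⟩
          · exact absurd huY hn
          · exact hi0u j hj'
        · obtain ⟨i0, hi0, hi0u⟩ := hO'.2.1 u
          refine ⟨i0, (hm'' u i0).mpr (Or.inl ⟨hi0, huY⟩), ?_⟩
          intro j hj
          rcases (hm'' u j).mp hj with ⟨hj', _⟩ | ⟨_, hY'⟩
          · exact hi0u j hj'
          · exact absurd hY' huY
      · intro i u hu
        rcases (hm'' u i).mp hu with ⟨hj', _⟩ | ⟨hj', _⟩
        · exact hO'.2.2 i hj'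
        · exact hO.2.2 i hj'
    have hx'' : x ∈ O'' b := (hm'' x b).mpr (Or.inl ⟨hxb', hxY⟩)
    have hpt : ∀ i, O i \ O'' i = (O i \ O' i) \ Y := by
      intro i
      ext u
      simp only [mem_sdiff, hm'']
      tauto
    have hle : ∀ i ∈ (univ : Finset I), (O i \ O'' i).card ≤ (O i \ O' i).card := by
      intro i _
      rw [hpt]
      exact card_le_card sdiff_subset
    obtain ⟨hn1, hn2, hnne, hnv⟩ := hnxt1 T hs0 le_rfl
    have hu1 : y (nxt T) ∈ O (v T) := by
      have := (hyfact _ hn1 hn2).1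
      rw [hnv] at this
      exact this
    have hu2 : y (nxt T) ∉ O' (v T) := by
      intro h
      have h' := (hyfact _ hn1 hn2).2.2
      have heq : v (nxt T) = v T := owner_unique hO' h' h
      rw [show nxt T = s0 + 1 from by rw [hnxtdef]; simp] at heq
      exact hcons s0 (heq.trans hvs0.symm)
    have hu3 : y (nxt T) ∈ Y := (hYiff _).mpr ⟨nxt T, ⟨hn1, hn2⟩, rfl⟩
    have hstrict : (O (v T) \ O'' (v T)).card < (O (v T) \ O' (v T)).card := by
      rw [hpt]
      apply Finset.card_lt_card
      rw [Finset.ssubset_iff_of_subset sdiff_subset]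
      exact ⟨y (nxt T), mem_sdiff.mpr ⟨hu1, hu2⟩, fun hc => (mem_sdiff.mp hc).2 hu3⟩
    have hsumlt : ∑ i, (O i \ O'' i).card < ∑ i, (O i \ O' i).card :=
      Finset.sum_lt_sum hle ⟨v T, mem_univ _, hstrict⟩
    have hmem'' : O'' ∈ S := by
      rw [hSdef, mem_filter]
      exact ⟨mem_univ _, halloc'', hx''⟩
    exact absurd (hmin O'' hmem'') (not_le.mpr hsumlt)


lemma blocker_of_no_typeI {k : I → ℕ} {L O : I → Finset X} (hO : LegalAlloc k L O)
    (hnoI : ∀ Xr xc, ¬ RemovableTypeI L O Xr xc) :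
    ∀ ic xc, xc ∈ O ic → ∃ b, xc ∈ L b ∧ b ≠ ic ∧ ∀ y ∈ O b, y ∉ L ic := by
  intro ic xc hxc
  by_contra hcon
  push_neg at hcon
  refine hnoI _ xc ⟨ic, hxc,
    (fun i => if h : xc ∈ L i ∧ i ≠ ic then (hcon i h.1 h.2).choose else xc), ?_, rfl⟩
  intro i hi hne
  have he : (if h : xc ∈ L i ∧ i ≠ ic then (hcon i h.1 h.2).choose else xc)
      = (hcon i hi hne).choose := dif_pos ⟨hi, hne⟩
  have hspec := (hcon i hi hne).choose_spec
  dsimp only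
  rw [he]
  refine ⟨hspec.1, hspec.2, ?_⟩
  intro heq
  apply hne
  apply owner_unique hO _ hxc
  rw [← heq]
  exact hspec.1

lemma step4 {k : I → ℕ} {L O : I → Finset X} (hO : LegalAlloc k L O)
    (hI : Fintype.card I = 4) (hk : ∀ i, 1 ≤ k i)
    (h2 : ∀ x : X, 2 ≤ (Finset.univ.filter (fun i => x ∈ L i)).card)
    (htight : ∀ i, ∀ x ∈ L i, ∃ O' : I → Finset X, LegalAlloc k L O' ∧ x ∈ O' i)
    (hblock : ∀ ic xc, xc ∈ O ic → ∃ b, xc ∈ L b ∧ b ≠ ic ∧ ∀ y ∈ O b, y ∉ L ic)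
    (hnoII : ∀ Xr, ¬ RemovableTypeII L O Xr) :
    ∀ a x, x ∈ O a → ∃ b e w, b ≠ a ∧ e ≠ a ∧ e ≠ b ∧ w ≠ a ∧ w ≠ b ∧ w ≠ e ∧
      (∀ i : I, i = a ∨ i = b ∨ i = e ∨ i = w) ∧
      x ∈ L b ∧ (∀ y ∈ O b, y ∉ L a) ∧
      (∃ z1 ∈ O b, z1 ∈ L e ∧ z1 ∉ L w) ∧
      (∃ z2 ∈ O e, z2 ∈ L a ∧ z2 ∉ L w) ∧ x ∉ L w := by
  intro a x hx
  obtain ⟨b, hxLb, hba, hΔab⟩ := hblock a x hx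
  rcases swap_cycle hO hI htight hx hxLb hba with
    ⟨z1, hz1O, hz1L⟩ |
    ⟨e, hea, heb, ⟨z1, hz1O, hz1L⟩, ⟨z2, hz2O, hz2L⟩⟩ |
    ⟨e, f, hea, heb, hfa, hfb, hfe, ⟨z1, hz1O, hz1L⟩, ⟨z2, hz2O, hz2L⟩, ⟨z3, hz3O, hz3L⟩⟩
  · exact absurd hz1L (hΔab z1 hz1O)
  · obtain ⟨w, hwa, hwb, hwe, hwex⟩ :=
      exists_fourth hI (Ne.symm hba) (Ne.symm hea) (Ne.symm heb)
    have hOw : (O w).Nonempty := Finset.card_pos.mp (by rw [hO.1 w]; exact hk w)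
    obtain ⟨y0, hy0⟩ := hOw
    have hp : ∃ p, y0 ∈ L p ∧ p ≠ w := by
      obtain ⟨p, hp1, q, hq1, hpq⟩ := Finset.one_lt_card.mp
        (lt_of_lt_of_le one_lt_two (h2 y0))
      rw [mem_filter] at hp1 hq1
      by_cases hpw : p = w
      · exact ⟨q, hq1.2, fun h => hpq (hpw.trans h.symm)⟩
      · exact ⟨p, hp1.2, hpw⟩
    obtain ⟨p, hpL, hpw⟩ := hp
    have hTII : (x ∈ L w ∨ z1 ∈ L w ∨ z2 ∈ L w) → False := by
      intro hc
      apply hnoII {x, z2, z1, y0}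
      have hex' : ∀ i : I, i = a ∨ i = e ∨ i = b ∨ i = w := by
        intro i; rcases hwex i with h | h | h | h <;> tauto
      refine typeII_of_tri hO (Ne.symm hea) (Ne.symm hba) (Ne.symm hwa) heb
        (Ne.symm hwe) (Ne.symm hwb) hex' hx hz2O hz1O hy0
        ⟨a, hx, hz2L, fun hc' => hea (owner_unique hO hz2O hc')⟩
        ⟨e, hz2O, hz1L, fun hc' => heb (owner_unique hO hc' hz1O)⟩
        ⟨b, hz1O, hxLb, fun hc' => hba (owner_unique hO hc' hx)⟩
        ?_ ?_
      · rcases hc with h | h | h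
        · exact ⟨x, Or.inl rfl, ⟨w, hy0, h, fun hc' => hwa (owner_unique hO hc' hx)⟩⟩
        · exact ⟨z1, Or.inr (Or.inr rfl),
            ⟨w, hy0, h, fun hc' => hwb (owner_unique hO hc' hz1O)⟩⟩
        · exact ⟨z2, Or.inr (Or.inl rfl),
            ⟨w, hy0, h, fun hc' => hwe (owner_unique hO hc' hz2O)⟩⟩
      · rcases hwex p with h | h | h | h
        · subst h
          exact ⟨x, Or.inl rfl, ⟨p, hx, hpL, fun hc' => hwa (owner_unique hO hy0 hc')⟩⟩
        · subst h
          exact ⟨z1, Or.inr (Or.inr rfl),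
            ⟨p, hz1O, hpL, fun hc' => hwb (owner_unique hO hy0 hc')⟩⟩
        · subst h
          exact ⟨z2, Or.inr (Or.inl rfl),
            ⟨p, hz2O, hpL, fun hc' => hwe (owner_unique hO hy0 hc')⟩⟩
        · exact absurd h hpw
    have hxw : x ∉ L w := fun h => hTII (Or.inl h)
    have hz1w : z1 ∉ L w := fun h => hTII (Or.inr (Or.inl h))
    have hz2w : z2 ∉ L w := fun h => hTII (Or.inr (Or.inr h))
    exact ⟨b, e, w, hba, hea, heb, hwa, hwb, hwe, hwex, hxLb, hΔab,
      ⟨z1, hz1O, hz1L, hz1w⟩, ⟨z2, hz2O, hz2L, hz2w⟩, hxw⟩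
  · exfalso
    apply hnoII {x, z3, z2, z1}
    have hex4 : ∀ i : I, i = a ∨ i = f ∨ i = e ∨ i = b := by
      obtain ⟨w, hw1, hw2, hw3, hwex⟩ :=
        exists_fourth hI (Ne.symm hba) (Ne.symm hea) (Ne.symm heb)
      have hfw : f = w := by
        rcases hwex f with h | h | h | h
        · exact absurd h hfa
        · exact absurd h hfb
        · exact absurd h hfe
        · exact h
      intro i
      rcases hwex i with h | h | h | h
      · tauto
      · tauto
      · tauto
      · rw [← hfw] at h; tauto
    refine typeII_of_cycle4 hO (Ne.symm hfa) (Ne.symm hea) (Ne.symm hba)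
      hfe hfb heb hex4 hx hz3O hz2O hz1O
      ⟨a, hx, hz3L, fun hc' => hfa (owner_unique hO hz3O hc')⟩
      ⟨f, hz3O, hz2L, fun hc' => hfe (owner_unique hO hc' hz2O)⟩
      ⟨e, hz2O, hz1L, fun hc' => heb (owner_unique hO hc' hz1O)⟩
      ⟨b, hz1O, hxLb, fun hc' => hba (owner_unique hO hc' hx)⟩

lemma step5 {k : I → ℕ} {L O : I → Finset X} (hO : LegalAlloc k L O)
    (hI : Fintype.card I = 4) (hk : ∀ i, 1 ≤ k i)
    (h2 : ∀ x : X, 2 ≤ (Finset.univ.filter (fun i => x ∈ L i)).card)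
    (htight : ∀ i, ∀ x ∈ L i, ∃ O' : I → Finset X, LegalAlloc k L O' ∧ x ∈ O' i)
    (hblock : ∀ ic xc, xc ∈ O ic → ∃ b, xc ∈ L b ∧ b ≠ ic ∧ ∀ y ∈ O b, y ∉ L ic)
    (hnoII : ∀ Xr, ¬ RemovableTypeII L O Xr) :
    ∀ a x, x ∈ O a → ∃ b e w, b ≠ a ∧ e ≠ a ∧ e ≠ b ∧ w ≠ a ∧ w ≠ b ∧ w ≠ e ∧
      (∀ i : I, i = a ∨ i = b ∨ i = e ∨ i = w) ∧
      (∀ y ∈ O b, y ∉ L a) ∧ (∀ y ∈ O e, y ∉ L b) ∧ (∀ y ∈ O a, y ∉ L e) ∧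
      x ∈ L b ∧ x ∉ L e ∧ x ∉ L w ∧
      (∃ z1 ∈ O b, z1 ∈ L e ∧ z1 ∉ L a ∧ z1 ∉ L w) ∧
      (∃ z2 ∈ O e, z2 ∈ L a ∧ z2 ∉ L b ∧ z2 ∉ L w) := by
  intro a x hx
  obtain ⟨b, e, w, hba, hea, heb, hwa, hwb, hwe, hwex, hxLb, hΔab,
    ⟨z1, hz1O, hz1Le, hz1w⟩, ⟨z2, hz2O, hz2La, hz2w⟩, hxw⟩ :=
    step4 hO hI hk h2 htight hblock hnoII a x hx
  obtain ⟨b', hz1Lb', hb'b, hΔbb'⟩ := hblock b z1 hz1O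
  have hb'e : b' = e := by
    rcases hwex b' with h | h | h | h
    · exact absurd hz1Lb' (by rw [h]; exact hΔab z1 hz1O)
    · exact absurd h hb'b
    · exact h
    · exact absurd hz1Lb' (by rw [h]; exact hz1w)
  rw [hb'e] at hΔbb'
  obtain ⟨b'', hz2Lb'', hb''e, hΔeb''⟩ := hblock e z2 hz2O
  have hb''a : b'' = a := by
    rcases hwex b'' with h | h | h | h
    · exact h
    · exact absurd hz2Lb'' (by rw [h]; exact hΔbb' z2 hz2O)
    · exact absurd h hb''e
    · exact absurd hz2Lb'' (by rw [h]; exact hz2w)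
  rw [hb''a] at hΔeb''
  exact ⟨b, e, w, hba, hea, heb, hwa, hwb, hwe, hwex, hΔab, hΔbb', hΔeb'',
    hxLb, hΔeb'' x hx, hxw,
    ⟨z1, hz1O, hz1Le, hΔab z1 hz1O, hz1w⟩,
    ⟨z2, hz2O, hz2La, hΔbb' z2 hz2O, hz2w⟩⟩


lemma rigid_final {k : I → ℕ} {L O : I → Finset X} (hO : LegalAlloc k L O)
    (hI : Fintype.card I = 4) (hk : ∀ i, 1 ≤ k i)
    (hstep5 : ∀ a x, x ∈ O a → ∃ b e w, b ≠ a ∧ e ≠ a ∧ e ≠ b ∧ w ≠ a ∧ w ≠ b ∧ w ≠ e ∧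
      (∀ i : I, i = a ∨ i = b ∨ i = e ∨ i = w) ∧
      (∀ y ∈ O b, y ∉ L a) ∧ (∀ y ∈ O e, y ∉ L b) ∧ (∀ y ∈ O a, y ∉ L e) ∧
      x ∈ L b ∧ x ∉ L e ∧ x ∉ L w ∧
      (∃ z1 ∈ O b, z1 ∈ L e ∧ z1 ∉ L a ∧ z1 ∉ L w) ∧
      (∃ z2 ∈ O e, z2 ∈ L a ∧ z2 ∉ L b ∧ z2 ∉ L w))
    {A B E W : I} (hBA : B ≠ A) (hEA : E ≠ A) (hEB : E ≠ B) (hWA : W ≠ A)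
    (hWB : W ≠ B) (hWE : W ≠ E)
    (hex : ∀ i : I, i = A ∨ i = B ∨ i = E ∨ i = W)
    (dAB : ∀ y ∈ O B, y ∉ L A) (dBE : ∀ y ∈ O E, y ∉ L B) (dEA : ∀ y ∈ O A, y ∉ L E)
    (dWA : ∀ y ∈ O A, y ∉ L W) (dBW : ∀ y ∈ O W, y ∉ L B)
    {z1 ξ : X} (hz1B : z1 ∈ O B) (hz1E : z1 ∈ L E) (hξB : ξ ∈ O B) (hξW : ξ ∈ L W)
    (hnoII_all : ∀ O'' : I → Finset X, LegalAlloc k L O'' →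
      ∀ Xr, ¬ RemovableTypeII L O'' Xr) : False := by
  classical
  -- every item of O W is of type {W, A}
  have hOW : ∀ u ∈ O W, u ∈ L A ∧ u ∉ L E := by
    intro u hu
    obtain ⟨β, ε, ω, hβW, hεW, hεβ, hωW, hωβ, hωε, hexu, dΔ1, dΔ2, dΔ3,
      huβ, huε, huω, hit1, hit2⟩ := hstep5 W u hu
    have hβ : β = A := by
      rcases hex β with h | h | h | h
      · exact h
      · exact absurd huβ (by rw [h]; exact dBW u hu)
      · exfalso
        obtain ⟨ζ1, hζ1O, hζ1ε, hζ1W, hζ1ω⟩ := hit1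
        rw [h] at hζ1O
        rcases hex ε with h' | h' | h' | h'
        · obtain ⟨ζ2, hζ2O, hζ2W', _, _⟩ := hit2
          rw [h'] at hζ2O
          exact dWA ζ2 hζ2O hζ2W'
        · rw [h'] at hζ1ε
          exact dBE ζ1 hζ1O hζ1ε
        · exact hεβ (h'.trans h.symm)
        · exact hεW h'
      · exact absurd h hβW
    have huE : u ∉ L E := by
      rcases hexu E with h | h | h | h
      · exact absurd h.symm hWE
      · rw [hβ] at h; exact absurd h hEA
      · rw [h]; exact huε
      · rw [h]; exact huω
    exact ⟨by rw [← hβ]; exact huβ, huE⟩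
  -- every item of O E is of type {E, A}
  have hOE : ∀ u ∈ O E, u ∈ L A ∧ u ∉ L W := by
    intro u hu
    obtain ⟨β, ε, ω, hβE, hεE, hεβ, hωE, hωβ, hωε, hexu, dΔ1, dΔ2, dΔ3,
      huβ, huε, huω, hit1, hit2⟩ := hstep5 E u hu
    have hβ : β = A := by
      rcases hex β with h | h | h | h
      · exact h
      · exact absurd huβ (by rw [h]; exact dBE u hu)
      · exact absurd h hβE
      · exfalso
        obtain ⟨ζ1, hζ1O, hζ1ε, hζ1E', hζ1ω⟩ := hit1
        rw [h] at hζ1O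
        rcases hex ε with h' | h' | h' | h'
        · obtain ⟨ζ2, hζ2O, hζ2E', _, _⟩ := hit2
          rw [h'] at hζ2O
          exact dEA ζ2 hζ2O hζ2E'
        · rw [h'] at hζ1ε
          exact dBW ζ1 hζ1O hζ1ε
        · exact hεE h'
        · exact hεβ (h'.trans h.symm)
    have huW : u ∉ L W := by
      rcases hexu W with h | h | h | h
      · exact absurd h hWE
      · rw [hβ] at h; exact absurd h hWA
      · rw [h]; exact huε
      · rw [h]; exact huω
    exact ⟨by rw [← hβ]; exact huβ, huW⟩
  -- every item of O A is legal to B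
  have hOA : ∀ u ∈ O A, u ∈ L B := by
    intro u hu
    obtain ⟨β, ε, ω, hβA, hεA, hεβ, hωA, hωβ, hωε, hexu, dΔ1, dΔ2, dΔ3,
      huβ, huε, huω, hit1, hit2⟩ := hstep5 A u hu
    have hβ : β = B := by
      rcases hex β with h | h | h | h
      · exact absurd h hβA
      · exact h
      · exact absurd huβ (by rw [h]; exact dEA u hu)
      · exact absurd huβ (by rw [h]; exact dWA u hu)
    rw [← hβ]; exact huβ
  -- ξ is not legal to E
  have hξE : ξ ∉ L E := by
    obtain ⟨β, ε, ω, hβB, hεB, hεβ, hωB, hωβ, hωε, hexu, dΔ1, dΔ2, dΔ3,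
      huβ, huε, huω, hit1, hit2⟩ := hstep5 B ξ hξB
    rcases hexu W with h | h | h | h
    · exact absurd h hWB
    · -- W = β
      rcases hexu E with h' | h' | h' | h'
      · exact absurd h' hEB
      · rw [← h] at h'; exact absurd h'.symm hWE
      · rw [h']; exact huε
      · rw [h']; exact huω
    · exact absurd hξW (by rw [h]; exact huε)
    · exact absurd hξW (by rw [h]; exact huω)
  -- pick items
  obtain ⟨ζ, hζO⟩ : (O E).Nonempty := Finset.card_pos.mp (by rw [hO.1 E]; exact hk E)
  obtain ⟨η, hηO⟩ : (O W).Nonempty := Finset.card_pos.mp (by rw [hO.1 W]; exact hk W)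
  obtain ⟨x, hxO⟩ : (O A).Nonempty := Finset.card_pos.mp (by rw [hO.1 A]; exact hk A)
  have hζA : ζ ∈ L A := (hOE ζ hζO).1
  have hηA : η ∈ L A := (hOW η hηO).1
  have hxB : x ∈ L B := hOA x hxO
  have hξz1 : ξ ≠ z1 := fun h => hξE (by rw [h]; exact hz1E)
  have hζx : ζ ≠ x := fun h => hEA (owner_unique hO hζO (by rw [h]; exact hxO))
  have hζz1 : ζ ≠ z1 := fun h => hEB (owner_unique hO hζO (by rw [h]; exact hz1B))
  have hxz1 : x ≠ z1 := fun h => hBA (owner_unique hO (show x ∈ O B by rw [h]; exact hz1B) hxO)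
  have hζOA : ζ ∉ O A := fun h => hEA (owner_unique hO hζO h)
  have hxOB : x ∉ O B := fun h => hBA (owner_unique hO h hxO)
  have hz1OE : z1 ∉ O E := fun h => hEB (owner_unique hO h hz1B)
  -- the new allocation
  set O' : I → Finset X := fun i =>
    if i = A then insert ζ ((O A).erase x)
    else if i = B then insert x ((O B).erase z1)
    else if i = E then insert z1 ((O E).erase ζ)
    else O i with hO'def
  have hOA' : O' A = insert ζ ((O A).erase x) := by rw [hO'def]; simp
  have hOB' : O' B = insert x ((O B).erase z1) := by
    rw [hO'def]; simp [hBA]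
  have hOE' : O' E = insert z1 ((O E).erase ζ) := by
    rw [hO'def]; simp [hEA, hEB]
  have hOo' : ∀ i, i ≠ A → i ≠ B → i ≠ E → O' i = O i := by
    intro i h1 h2 h3; rw [hO'def]; simp [h1, h2, h3]
  have hmem : ∀ (u : X) (i : I),
      u ∈ O' i ↔ ((i = A ∧ (u = ζ ∨ (u ∈ O A ∧ u ≠ x))) ∨
        (i = B ∧ (u = x ∨ (u ∈ O B ∧ u ≠ z1))) ∨
        (i = E ∧ (u = z1 ∨ (u ∈ O E ∧ u ≠ ζ))) ∨
        (i ≠ A ∧ i ≠ B ∧ i ≠ E ∧ u ∈ O i)) := by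
    intro u i
    by_cases h1 : i = A
    · subst h1
      rw [hOA', mem_insert, mem_erase]
      constructor
      · rintro (rfl | ⟨hne, hmem'⟩)
        · exact Or.inl ⟨rfl, Or.inl rfl⟩
        · exact Or.inl ⟨rfl, Or.inr ⟨hmem', hne⟩⟩
      · rintro (⟨-, rfl | ⟨hm, hne⟩⟩ | ⟨h, -⟩ | ⟨h, -⟩ | ⟨h, -⟩)
        · exact Or.inl rfl
        · exact Or.inr ⟨hne, hm⟩
        · exact absurd h.symm hBA
        · exact absurd h.symm hEA
        · exact absurd rfl h
    · by_cases h2 : i = B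
      · subst h2
        rw [hOB', mem_insert, mem_erase]
        constructor
        · rintro (rfl | ⟨hne, hmem'⟩)
          · exact Or.inr (Or.inl ⟨rfl, Or.inl rfl⟩)
          · exact Or.inr (Or.inl ⟨rfl, Or.inr ⟨hmem', hne⟩⟩)
        · rintro (⟨h, -⟩ | ⟨-, rfl | ⟨hm, hne⟩⟩ | ⟨h, -⟩ | ⟨-, h, -⟩)
          · exact absurd h h1
          · exact Or.inl rfl
          · exact Or.inr ⟨hne, hm⟩
          · exact absurd h.symm hEB
          · exact absurd rfl h
      · by_cases h3 : i = E
        · subst h3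
          rw [hOE', mem_insert, mem_erase]
          constructor
          · rintro (rfl | ⟨hne, hmem'⟩)
            · exact Or.inr (Or.inr (Or.inl ⟨rfl, Or.inl rfl⟩))
            · exact Or.inr (Or.inr (Or.inl ⟨rfl, Or.inr ⟨hmem', hne⟩⟩))
          · rintro (⟨h, -⟩ | ⟨h, -⟩ | ⟨-, rfl | ⟨hm, hne⟩⟩ | ⟨-, -, h, -⟩)
            · exact absurd h h1
            · exact absurd h h2
            · exact Or.inl rfl
            · exact Or.inr ⟨hne, hm⟩
            · exact absurd rfl h
        · rw [hOo' i h1 h2 h3]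
          constructor
          · intro h
            exact Or.inr (Or.inr (Or.inr ⟨h1, h2, h3, h⟩))
          · rintro (⟨h, -⟩ | ⟨h, -⟩ | ⟨h, -⟩ | ⟨-, -, -, h⟩)
            · exact absurd h h1
            · exact absurd h h2
            · exact absurd h h3
            · exact h
  have halloc' : LegalAlloc k L O' := by
    refine ⟨?_, ?_, ?_⟩
    · intro i
      rcases hex i with h | h | h | h <;> rw [h]
      · rw [hOA', card_insert_of_notMem (fun hc => hζOA (mem_of_mem_erase hc)),
          card_erase_of_mem hxO, hO.1 A]
        have := hk A; omega
      · rw [hOB', card_insert_of_notMem (fun hc => hxOB (mem_of_mem_erase hc)),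
          card_erase_of_mem hz1B, hO.1 B]
        have := hk B; omega
      · rw [hOE', card_insert_of_notMem (fun hc => hz1OE (mem_of_mem_erase hc)),
          card_erase_of_mem hζO, hO.1 E]
        have := hk E; omega
      · rw [hOo' W hWA hWB hWE]; exact hO.1 W
    · intro u
      by_cases h1 : u = ζ
      · rw [h1]
        refine ⟨A, (hmem ζ A).mpr (Or.inl ⟨rfl, Or.inl rfl⟩), ?_⟩
        intro j hj
        rcases (hmem ζ j).mp hj with ⟨hA, -⟩ | ⟨hB, hin⟩ | ⟨hE, hin⟩ | ⟨-, -, hE', hin⟩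
        · exact hA
        · exfalso
          rcases hin with h | ⟨hOB'', -⟩
          · exact hζx h
          · exact hEB (owner_unique hO hζO hOB'')
        · exfalso
          rcases hin with h | ⟨-, hne⟩
          · exact hζz1 h
          · exact hne rfl
        · exact absurd (owner_unique hO hζO hin).symm hE'
      · by_cases h2 : u = x
        · rw [h2]
          refine ⟨B, (hmem x B).mpr (Or.inr (Or.inl ⟨rfl, Or.inl rfl⟩)), ?_⟩
          intro j hj
          rcases (hmem x j).mp hj with ⟨hA, hin⟩ | ⟨hB, -⟩ | ⟨hE, hin⟩ | ⟨hA', -, -, hin⟩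
          · exfalso
            rcases hin with h | ⟨-, hne⟩
            · exact hζx h.symm
            · exact hne rfl
          · exact hB
          · exfalso
            rcases hin with h | ⟨hOE'', -⟩
            · exact hxz1 h
            · exact hEA (owner_unique hO hOE'' hxO)
          · exact absurd (owner_unique hO hxO hin).symm hA'
        · by_cases h3 : u = z1
          · rw [h3]
            refine ⟨E, (hmem z1 E).mpr (Or.inr (Or.inr (Or.inl ⟨rfl, Or.inl rfl⟩))), ?_⟩
            intro j hj
            rcases (hmem z1 j).mp hj with ⟨hA, hin⟩ | ⟨hB, hin⟩ | ⟨hE, -⟩ | ⟨-, hB', -, hin⟩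
            · exfalso
              rcases hin with h | ⟨hOA'', -⟩
              · exact hζz1 h.symm
              · exact hBA (owner_unique hO hz1B hOA'')
            · exfalso
              rcases hin with h | ⟨-, hne⟩
              · exact hxz1 h.symm
              · exact hne rfl
            · exact hE
            · exact absurd (owner_unique hO hz1B hin).symm hB'
          · obtain ⟨i0, hi0, hi0u⟩ := hO.2.1 u
            have hmem0 : u ∈ O' i0 := by
              rcases hex i0 with h | h | h | h <;> rw [h] at hi0 ⊢
              · exact (hmem u A).mpr (Or.inl ⟨rfl, Or.inr ⟨hi0, h2⟩⟩)
              · exact (hmem u B).mpr (Or.inr (Or.inl ⟨rfl, Or.inr ⟨hi0, h3⟩⟩))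
              · exact (hmem u E).mpr (Or.inr (Or.inr (Or.inl ⟨rfl, Or.inr ⟨hi0, h1⟩⟩)))
              · exact (hmem u W).mpr (Or.inr (Or.inr (Or.inr ⟨hWA, hWB, hWE, hi0⟩)))
            refine ⟨i0, hmem0, ?_⟩
            intro j hj
            rcases (hmem u j).mp hj with ⟨hA, hin⟩ | ⟨hB, hin⟩ | ⟨hE, hin⟩ | ⟨-, -, -, hin⟩
            · rcases hin with h | ⟨hm, -⟩
              · exact absurd h h1
              · rw [hA]; exact hi0u A hm
            · rcases hin with h | ⟨hm, -⟩
              · exact absurd h h2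
              · rw [hB]; exact hi0u B hm
            · rcases hin with h | ⟨hm, -⟩
              · exact absurd h h3
              · rw [hE]; exact hi0u E hm
            · exact hi0u j hin
    · intro i
      rcases hex i with h | h | h | h <;> rw [h]
      · rw [hOA']
        intro u hu
        rcases mem_insert.mp hu with rfl | hu'
        · exact hζA
        · exact hO.2.2 A (mem_of_mem_erase hu')
      · rw [hOB']
        intro u hu
        rcases mem_insert.mp hu with rfl | hu'
        · exact hxB
        · exact hO.2.2 B (mem_of_mem_erase hu')
      · rw [hOE']
        intro u hu
        rcases mem_insert.mp hu with rfl | hu'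
        · exact hz1E
        · exact hO.2.2 E (mem_of_mem_erase hu')
      · rw [hOo' W hWA hWB hWE]; exact hO.2.2 W
  -- representatives in O'
  have hζO' : ζ ∈ O' A := by rw [hOA']; exact mem_insert_self _ _
  have hηO' : η ∈ O' W := by rw [hOo' W hWA hWB hWE]; exact hηO
  have hξO' : ξ ∈ O' B := by
    rw [hOB']; exact mem_insert_of_mem (mem_erase.mpr ⟨hξz1, hξB⟩)
  have hz1O' : z1 ∈ O' E := by rw [hOE']; exact mem_insert_self _ _
  -- the 4-cycle of legality edges
  have eAW : LegalityEdge L O' ζ η := by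
    refine ⟨A, hζO', hηA, ?_⟩
    rw [hOA']
    intro hc
    rcases mem_insert.mp hc with h | h
    · exact hWE (owner_unique hO hηO (show η ∈ O E by rw [h]; exact hζO))
    · exact hWA (owner_unique hO hηO (mem_of_mem_erase h))
  have eWB : LegalityEdge L O' η ξ := by
    refine ⟨W, hηO', hξW, ?_⟩
    rw [hOo' W hWA hWB hWE]
    intro hc
    exact hWB (owner_unique hO hc hξB)
  have eBE : LegalityEdge L O' ξ z1 := by
    refine ⟨B, hξO', hO.2.2 B hz1B, ?_⟩
    rw [hOB']
    intro hc
    rcases mem_insert.mp hc with h | h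
    · exact hxz1 h.symm
    · exact (mem_erase.mp h).1 rfl
  have eEA : LegalityEdge L O' z1 ζ := by
    refine ⟨E, hz1O', hO.2.2 E hζO, ?_⟩
    rw [hOE']
    intro hc
    rcases mem_insert.mp hc with h | h
    · exact hζz1 h
    · exact (mem_erase.mp h).1 rfl
  have hex' : ∀ i : I, i = A ∨ i = W ∨ i = B ∨ i = E := by
    intro i; rcases hex i with h | h | h | h <;> tauto
  exact hnoII_all O' halloc' {ζ, η, ξ, z1}
    (typeII_of_cycle4 halloc' (Ne.symm hWA) (Ne.symm hBA) (Ne.symm hEA)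
      hWB hWE (Ne.symm hEB) hex' hζO' hηO' hξO' hz1O' eAW eWB eBE eEA)


lemma main_contra {k : I → ℕ} {L O : I → Finset X} (hO : LegalAlloc k L O)
    (hI : Fintype.card I = 4) (hk : ∀ i, 1 ≤ k i)
    (h2 : ∀ x : X, 2 ≤ (Finset.univ.filter (fun i => x ∈ L i)).card)
    (htight : ∀ i, ∀ x ∈ L i, ∃ O' : I → Finset X, LegalAlloc k L O' ∧ x ∈ O' i)
    (hblock : ∀ ic xc, xc ∈ O ic → ∃ b, xc ∈ L b ∧ b ≠ ic ∧ ∀ y ∈ O b, y ∉ L ic)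
    (hnoII : ∀ Xr, ¬ RemovableTypeII L O Xr)
    (hnoII_all : ∀ O'' : I → Finset X, LegalAlloc k L O'' →
      ∀ Xr, ¬ RemovableTypeII L O'' Xr) : False := by
  have hstep5 := step5 hO hI hk h2 htight hblock hnoII
  have hIne : Nonempty I := Fintype.card_pos_iff.mp (by rw [hI]; norm_num)
  obtain ⟨a⟩ := hIne
  obtain ⟨x0, hx0⟩ : (O a).Nonempty := Finset.card_pos.mp (by rw [hO.1 a]; exact hk a)
  obtain ⟨b, e, w, hba, hea, heb, hwa, hwb, hwe, hwex, dab, dbe, dea, hx0b, hx0e, hx0w,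
    ⟨z1, hz1O, hz1e, hz1a, hz1w⟩, ⟨z2, hz2O, hz2a, hz2b, hz2w⟩⟩ := hstep5 a x0 hx0
  obtain ⟨y0, hy0⟩ : (O w).Nonempty := Finset.card_pos.mp (by rw [hO.1 w]; exact hk w)
  obtain ⟨β, ε, ω, hβw, hεw, hεβ, hωw, hωβ, hωε, hexy, dwβ, dβε, dεw,
    hy0β, hy0ε, hy0ω, ⟨ζ1, hζ1O, hζ1ε, hζ1w', hζ1ω⟩,
    ⟨ζ2, hζ2O, hζ2w, hζ2β, hζ2ω⟩⟩ := hstep5 w y0 hy0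
  rcases hwex β with hβ | hβ | hβ | hβ
  · -- β = a
    rcases hwex ε with hε | hε | hε | hε
    · rw [hβ] at hεβ; exact hεβ hε
    · -- ε = b : pattern (A,B,E,W) = (a,b,e,w)
      rw [hβ] at dwβ
      rw [hε] at dεw hζ2O
      exact rigid_final hO hI hk hstep5 hba hea heb hwa hwb hwe hwex
        dab dbe dea dwβ dεw hz1O hz1e hζ2O hζ2w hnoII_all
    · -- ε = e : contradiction with z2 ∈ O e ∩ L a
      rw [hβ, hε] at dβε
      exact dβε z2 hz2O hz2a
    · exact hεw hε
  · -- β = b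
    rcases hwex ε with hε | hε | hε | hε
    · -- ε = a : ζ1 ∈ O b ∩ L a contradicts dab
      rw [hβ] at hζ1O
      rw [hε] at hζ1ε
      exact dab ζ1 hζ1O hζ1ε
    · rw [hβ] at hεβ; exact hεβ hε
    · -- ε = e : pattern (A,B,E,W) = (b,e,a,w)
      rw [hβ] at dwβ
      rw [hε] at dεw hζ2O
      have hex2 : ∀ i : I, i = b ∨ i = e ∨ i = a ∨ i = w := by
        intro i; rcases hwex i with h | h | h | h <;> tauto
      exact rigid_final hO hI hk hstep5 heb (Ne.symm hba) (Ne.symm hea) hwb hwe hwa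
        hex2 dbe dea dab dwβ dεw hz2O hz2a hζ2O hζ2w hnoII_all
    · exact hεw hε
  · -- β = e
    rcases hwex ε with hε | hε | hε | hε
    · -- ε = a : pattern (A,B,E,W) = (e,a,b,w)
      rw [hβ] at dwβ
      rw [hε] at dεw hζ2O
      have hex3 : ∀ i : I, i = e ∨ i = a ∨ i = b ∨ i = w := by
        intro i; rcases hwex i with h | h | h | h <;> tauto
      exact rigid_final hO hI hk hstep5 (Ne.symm hea) (Ne.symm heb) hba hwe hwa hwb
        hex3 dea dab dbe dwβ dεw hx0 hx0b hζ2O hζ2w hnoII_all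
    · -- ε = b : ζ1 ∈ O e ∩ L b contradicts dbe
      rw [hβ] at hζ1O
      rw [hε] at hζ1ε
      exact dbe ζ1 hζ1O hζ1ε
    · rw [hβ] at hεβ; exact hεβ hε
    · exact hεw hε
  · exact hβw hβ

end Helpers

/-- In a simplified market with exactly four players, in which every item is legal to
at least two players and no item is legal to all four players, there is a legal
allocation admitting a removable set of type I or of type II. -/
theorem exists_removable_set_four_players
    {X I : Type*} [Fintype X] [DecidableEq X] [Fintype I] [DecidableEq I]
    (k : I → ℕ) (hk : ∀ i, 1 ≤ k i) (hsum : ∑ i, k i = Fintype.card X)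
    (hI : Fintype.card I = 4)
    (L : I → Finset X)
    (htight : ∀ i, ∀ x ∈ L i, ∃ O : I → Finset X, LegalAlloc k L O ∧ x ∈ O i)
    (h2 : ∀ x : X, 2 ≤ (Finset.univ.filter (fun i => x ∈ L i)).card)
    (hnotall : ∀ x : X, ¬ ∀ i, x ∈ L i) :
    ∃ (O : I → Finset X), LegalAlloc k L O ∧
      ∃ Xr : Finset X,
        (∃ xc, RemovableTypeI L O Xr xc) ∨ RemovableTypeII L O Xr := by
  by_contra hcon
  have hnoII_all : ∀ O'' : I → Finset X, LegalAlloc k L O'' →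
      ∀ Xr, ¬ RemovableTypeII L O'' Xr := by
    intro O'' hA Xr hII
    exact hcon ⟨O'', hA, Xr, Or.inr hII⟩
  have hnoI_all : ∀ O'' : I → Finset X, LegalAlloc k L O'' →
      ∀ Xr xc, ¬ RemovableTypeI L O'' Xr xc := by
    intro O'' hA Xr xc hI'
    exact hcon ⟨O'', hA, Xr, Or.inl ⟨xc, hI'⟩⟩
  have hIne : Nonempty I := Fintype.card_pos_iff.mp (by rw [hI]; norm_num)
  have hXne : Nonempty X := by
    by_contra hne
    have hc0 : Fintype.card X = 0 := by
      rw [Fintype.card_eq_zero_iff]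
      exact not_nonempty_iff.mp hne
    have hs : ∑ i, k i = 0 := by rw [hsum, hc0]
    obtain ⟨i⟩ := hIne
    have hki : k i = 0 := by
      by_contra hki
      have : 0 < ∑ j, k j := Finset.sum_pos' (fun j _ => Nat.zero_le _)
        ⟨i, Finset.mem_univ i, Nat.pos_of_ne_zero hki⟩
      omega
    have := hk i
    omega
  obtain ⟨x00⟩ := hXne
  have hx00 : ∃ i, x00 ∈ L i := by
    obtain ⟨p, hp, q, hq, hpq⟩ := Finset.one_lt_card.mp
      (lt_of_lt_of_le one_lt_two (h2 x00))
    rw [Finset.mem_filter] at hp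
    exact ⟨p, hp.2⟩
  obtain ⟨i00, hi00⟩ := hx00
  obtain ⟨O, hO, -⟩ := htight i00 x00 hi00
  exact main_contra hO hI hk h2 htight
    (blocker_of_no_typeI hO (hnoI_all O hO)) (hnoII_all O hO) hnoII_all
end

section
/- In a simplified market that has at most two legal allocations and in which every item is legal to at least two players, let O be a legal allocation and let C be a uniquely assigned cycle in the legality graph G(O). Then every player i has exactly 0 or exactly 2 legal items among the vertices of C, i.e., |V(C) ∩ 𝓛(i)| ∈ {0, 2}. -/
open Finset

/-! Rotating the bundles one step along a uniquely assigned cycle (each owner gives up its cycle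
item and takes the next one) yields a second legal allocation `O' ≠ O`. With at most two legal
allocations and tightness, `𝓛 i = O i ∪ O' i`, so the players to whom a cycle item is legal are
exactly its owners in `O` and in `O'`. Since the owner of `z j` in `O` is the owner of `z (j + 1)`
in `O'` and owners are distinct, each owner has exactly two legal cycle items and every other
player none. -/

section

variable {X I : Type*}

theorem LegalAlloc.mem_iff_eq {k : I → ℕ} {L O : I → Finset X} (hO : LegalAlloc k L O)
    {x : X} {i : I} (hx : x ∈ O i) (i' : I) : x ∈ O i' ↔ i = i' :=
  ⟨fun h => ((hO.2.1 x).unique h hx).symm, by rintro rfl; exact hx⟩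

theorem LegalAlloc.legal_eq_union [DecidableEq X] {k : I → ℕ} {L O O' : I → Finset X}
    (htight : ∀ i, ∀ x ∈ L i, ∃ O : I → Finset X, LegalAlloc k L O ∧ x ∈ O i)
    (htwo : ∀ O₁ O₂ O₃ : I → Finset X,
      LegalAlloc k L O₁ → LegalAlloc k L O₂ → LegalAlloc k L O₃ →
      O₁ = O₂ ∨ O₁ = O₃ ∨ O₂ = O₃)
    (hO : LegalAlloc k L O) (hO' : LegalAlloc k L O') (hne : O ≠ O') (i : I) :
    L i = O i ∪ O' i := by
  refine subset_antisymm (fun x hx => ?_) (union_subset (hO.2.2 i) (hO'.2.2 i))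
  obtain ⟨A, hA, hxA⟩ := htight i x hx
  rcases htwo O O' A hO hO' hA with h | rfl | rfl
  · exact absurd h hne
  · exact mem_union_left _ hxA
  · exact mem_union_right _ hxA

theorem injective_of_card_filter_le_one [DecidableEq X] {ι : Type*} [Fintype ι] {z : ι → X}
    {O : I → Finset X} (hua : ∀ i, #{j | z j ∈ O i} ≤ 1) {f : ι → I}
    (hf : ∀ j, z j ∈ O (f j)) : Function.Injective f := fun a b hab =>
  card_le_one.1 (hua (f a)) a (by simp [hf]) b (by simp [hab, hf])

theorem card_filter_eq_or_sub_one_eq [DecidableEq I] {l : ℕ} {f : Fin (l + 1) → I}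
    (hf : Function.Injective f) (hl : ∀ j : Fin (l + 1), j + 1 ≠ j) (i : I) :
    #{m | f m = i ∨ f (m - 1) = i} = 0 ∨ #{m | f m = i ∨ f (m - 1) = i} = 2 := by
  by_cases hi : ∃ j, f j = i
  · obtain ⟨j, rfl⟩ := hi
    have hpair : ({m | f m = f j ∨ f (m - 1) = f j} : Finset _) = {j, j + 1} := by
      ext m
      simp [hf.eq_iff, sub_eq_iff_eq_add]
    right
    rw [hpair, card_pair (hl j).symm]
  · push Not at hi
    simp [hi]

section rotate

variable [DecidableEq X] [DecidableEq I] {l : ℕ}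

/-- The allocation obtained from `O` by handing `z (j + 1)` to the owner `f j` of `z j`. -/
def rotateAlong (O : I → Finset X) (z : Fin (l + 1) → X) (f : Fin (l + 1) → I) (i : I) :
    Finset X :=
  O i \ univ.image z ∪ (univ.filter (f · = i)).image (fun j => z (j + 1))

variable {O : I → Finset X} {z : Fin (l + 1) → X} {f : Fin (l + 1) → I}

theorem mem_rotateAlong_apply (hz : Function.Injective z) (m : Fin (l + 1)) (i : I) :
    z m ∈ rotateAlong O z f i ↔ f (m - 1) = i := by
  simp [rotateAlong, hz.eq_iff, ← eq_sub_iff_add_eq]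

theorem mem_rotateAlong_of_notMem_range {x : X} (hx : x ∉ univ.image z) (i : I) :
    x ∈ rotateAlong O z f i ↔ x ∈ O i := by
  simp only [rotateAlong, mem_union, mem_sdiff, hx, not_false_eq_true, and_true,
    or_iff_left_iff_imp]
  intro h
  obtain ⟨j, -, rfl⟩ := mem_image.1 h
  exact absurd (mem_image_of_mem z (mem_univ _)) hx

theorem card_rotateAlong (hz : Function.Injective z) (hown : ∀ m i, z m ∈ O i ↔ f m = i)
    (i : I) : #(rotateAlong O z f i) = #(O i) := by
  have hinter : O i ∩ univ.image z = (univ.filter (f · = i)).image z := by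
    ext x
    simp only [mem_inter, mem_image, mem_filter, mem_univ, true_and]
    constructor
    · rintro ⟨hx, j, -, rfl⟩
      exact ⟨j, (hown j i).1 hx, rfl⟩
    · rintro ⟨j, hj, rfl⟩
      exact ⟨(hown j i).2 hj, j, rfl⟩
  have hdisj :
      Disjoint (O i \ univ.image z) ((univ.filter (f · = i)).image (fun j => z (j + 1))) := by
    simp only [disjoint_left, mem_sdiff, mem_image]
    rintro _ ⟨-, hx⟩ ⟨j, -, rfl⟩
    exact hx ⟨j + 1, mem_univ _, rfl⟩
  rw [rotateAlong, card_union_of_disjoint hdisj, ← card_sdiff_add_card_inter (O i) (univ.image z),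
    hinter, card_image_of_injective _ hz,
    card_image_of_injective (f := fun j => z (j + 1)) _ (hz.comp (add_left_injective 1))]

theorem LegalAlloc.rotateAlong {k : I → ℕ} {L : I → Finset X} (hO : LegalAlloc k L O)
    (hz : Function.Injective z) (hown : ∀ m i, z m ∈ O i ↔ f m = i)
    (hnext : ∀ j, z (j + 1) ∈ L (f j)) : LegalAlloc k L (rotateAlong O z f) := by
  refine ⟨fun i => (card_rotateAlong hz hown i).trans (hO.1 i), fun x => ?_, fun i x hx => ?_⟩
  · by_cases hx : x ∈ univ.image z
    · obtain ⟨m, -, rfl⟩ := mem_image.1 hx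
      exact ⟨f (m - 1), (mem_rotateAlong_apply hz m _).2 rfl,
        fun i hi => ((mem_rotateAlong_apply hz m i).1 hi).symm⟩
    · simpa only [mem_rotateAlong_of_notMem_range hx] using hO.2.1 x
  · simp only [_root_.rotateAlong, mem_union, mem_sdiff, mem_image, mem_filter, mem_univ,
      true_and] at hx
    rcases hx with ⟨hx, -⟩ | ⟨j, rfl, rfl⟩
    · exact hO.2.2 i hx
    · exact hnext j

theorem rotateAlong_ne (hz : Function.Injective z) {j : Fin (l + 1)} (hj : z (j + 1) ∉ O (f j)) :
    O ≠ rotateAlong O z f := fun h =>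
  hj (h ▸ (mem_rotateAlong_apply hz (j + 1) (f j)).2 (by rw [add_sub_cancel_right]))

end rotate

end

theorem zero_or_two_legal_items_on_uniquely_assigned_cycle_general
    {X I : Type*} [DecidableEq X]
    (k : I → ℕ)
    (L : I → Finset X)
    (htight : ∀ i, ∀ x ∈ L i, ∃ O : I → Finset X, LegalAlloc k L O ∧ x ∈ O i)
    (htwo : ∀ O₁ O₂ O₃ : I → Finset X,
      LegalAlloc k L O₁ → LegalAlloc k L O₂ → LegalAlloc k L O₃ →
      O₁ = O₂ ∨ O₁ = O₃ ∨ O₂ = O₃)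
    (O : I → Finset X) (hO : LegalAlloc k L O)
    (l : ℕ) (z : Fin (l + 1) → X)
    (hzinj : Function.Injective z)
    (hzedge : ∀ j, LegalityEdge L O (z j) (z (j + 1)))
    (hzua : ∀ i, (Finset.univ.filter (fun j : Fin (l + 1) => z j ∈ O i)).card ≤ 1) :
    ∀ i, (Finset.univ.filter (fun j : Fin (l + 1) => z j ∈ L i)).card = 0 ∨
      (Finset.univ.filter (fun j : Fin (l + 1) => z j ∈ L i)).card = 2 := by
  classical
  choose f hfO hfL hfO' using hzedge
  have hown : ∀ m i, z m ∈ O i ↔ f m = i := fun m => hO.mem_iff_eq (hfO m)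
  have hL : ∀ m i, z m ∈ L i ↔ f m = i ∨ f (m - 1) = i := by
    intro m i
    rw [LegalAlloc.legal_eq_union htight htwo hO (hO.rotateAlong hzinj hown hfL)
      (rotateAlong_ne hzinj (hfO' 0)), mem_union, hown, mem_rotateAlong_apply hzinj]
  intro i
  simp only [hL]
  exact card_filter_eq_or_sub_one_eq (injective_of_card_filter_le_one hzua hfO)
    (fun j h => hfO' j (by rw [h]; exact hfO j)) i

/-- In a simplified market with at most two legal allocations in which every item is
legal to at least two players, every player has exactly `0` or exactly `2` legal items
among the vertices of a uniquely assigned cycle of the legality graph. -/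
theorem zero_or_two_legal_items_on_uniquely_assigned_cycle
    {X I : Type*} [Fintype X] [DecidableEq X] [Fintype I] [DecidableEq I]
    (k : I → ℕ) (hk : ∀ i, 1 ≤ k i) (hsum : ∑ i, k i = Fintype.card X)
    (hI : 2 ≤ Fintype.card I)
    (L : I → Finset X)
    (htight : ∀ i, ∀ x ∈ L i, ∃ O : I → Finset X, LegalAlloc k L O ∧ x ∈ O i)
    (h2 : ∀ x : X, 2 ≤ (Finset.univ.filter (fun i => x ∈ L i)).card)
    (htwo : ∀ O₁ O₂ O₃ : I → Finset X,
      LegalAlloc k L O₁ → LegalAlloc k L O₂ → LegalAlloc k L O₃ →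
      O₁ = O₂ ∨ O₁ = O₃ ∨ O₂ = O₃)
    (O : I → Finset X) (hO : LegalAlloc k L O)
    (l : ℕ) (z : Fin (l + 1) → X)
    (hzinj : Function.Injective z)
    (hzedge : ∀ j, LegalityEdge L O (z j) (z (j + 1)))
    (hzua : ∀ i, (Finset.univ.filter (fun j : Fin (l + 1) => z j ∈ O i)).card ≤ 1) :
    ∀ i, (Finset.univ.filter (fun j : Fin (l + 1) => z j ∈ L i)).card = 0 ∨
      (Finset.univ.filter (fun j : Fin (l + 1) => z j ∈ L i)).card = 2 :=
  zero_or_two_legal_items_on_uniquely_assigned_cycle_general k L htight htwo O hO l z hzinj hzedge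
    hzua
end

section
/- Every multi-demand market with strictly positive item valuations that has at most two optimal allocations admits a dynamic pricing: there exists p ∈ ℝ^X with p_x > 0 for all x such that for every player i and every bundle S that is in demand for i under p, some optimal allocation assigns exactly the bundle S to player i. -/
/-!
Encode an allocation by its owner map `ω : X → I`; since valuations are positive and bundles
have exactly `k i` items, its welfare is `∑ x, v (ω x) x`. Let `ω₁, ω₂` be the optimal owner maps
(`ω₂ = ω₁` if the optimum is unique) and `M` the set of items on which they disagree.

Mixing `ω₁` and `ω₂` on a nonempty balanced proper part of `M` would produce a third optimum, so
any permutation of `M` carrying `ω₂` to `ω₁` is a single cycle; as a transposition changes the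
sign, every player owns at most one item of `M` under `ω₁`, and at most one under `ω₂`.
Similarly, every cycle of item moves out of `ω₁` loses welfare once a move onto the `ω₂`-owner is
charged its loss only, so the exchange graph has a strict potential `Δ`. Under the prices
`v (ω₁ x) x - Δ (ω₁ x) + const`, each player strictly prefers her own items to all others except
the item she receives under `ω₂`; a small surcharge on the item she gives away under `ω₂` makes
her demand exactly her `ω₁`-bundle or her `ω₂`-bundle.
-/

open Finset

/-- The value of a bundle `S` for a player with demand `k` and item valuations `v`:
the maximum, over subsets `T ⊆ S` with `|T| ≤ k`, of the total value of `T`. -/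
noncomputable def bundleValue {X : Type*} [DecidableEq X] (k : ℕ) (v : X → ℝ)
    (S : Finset X) : ℝ :=
  ((S.powerset.filter (fun T => T.card ≤ k)).image (fun T => ∑ x ∈ T, v x)).max'
    (Finset.Nonempty.image ⟨∅, by simp⟩ _)

/-- An allocation: a partition of the items where player `i` gets exactly `k i` items. -/
def IsAllocation {X I : Type*} (k : I → ℕ) (O : I → Finset X) : Prop :=
  (∀ i, (O i).card = k i) ∧ (∀ x : X, ∃! i, x ∈ O i)

/-- Social welfare of an allocation. -/
noncomputable def socialWelfare {X I : Type*} [DecidableEq X] [Fintype I]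
    (v : I → X → ℝ) (k : I → ℕ) (O : I → Finset X) : ℝ :=
  ∑ i, bundleValue (k i) (v i) (O i)

/-- An optimal allocation: an allocation maximizing social welfare. -/
def IsOptimal {X I : Type*} [DecidableEq X] [Fintype I]
    (v : I → X → ℝ) (k : I → ℕ) (O : I → Finset X) : Prop :=
  IsAllocation k O ∧
    ∀ O' : I → Finset X, IsAllocation k O' → socialWelfare v k O' ≤ socialWelfare v k O

section BundleValue
variable {X : Type*} [DecidableEq X] (k : ℕ) (v : X → ℝ) (S : Finset X)

lemma exists_subset_bundleValue_eq_sum :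
    ∃ T ⊆ S, #T ≤ k ∧ bundleValue k v S = ∑ x ∈ T, v x := by
  obtain ⟨T, hT, hval⟩ := mem_image.mp (max'_mem
    ((S.powerset.filter (#· ≤ k)).image (fun T => ∑ x ∈ T, v x)) (Nonempty.image ⟨∅, by simp⟩ _))
  rw [mem_filter, mem_powerset] at hT
  exact ⟨T, hT.1, hT.2, hval.symm⟩

lemma sum_le_bundleValue {T : Finset X} (hT : T ⊆ S) (hk : #T ≤ k) :
    ∑ x ∈ T, v x ≤ bundleValue k v S :=
  le_max' _ _ <| mem_image_of_mem (fun T => ∑ x ∈ T, v x) <|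
    mem_filter.mpr ⟨mem_powerset.mpr hT, hk⟩

lemma bundleValue_eq_sum (h : #S ≤ k) (hv : ∀ x ∈ S, 0 ≤ v x) :
    bundleValue k v S = ∑ x ∈ S, v x := by
  refine le_antisymm (max'_le _ _ _ fun y hy => ?_) (sum_le_bundleValue k v S Subset.rfl h)
  obtain ⟨T, hT, rfl⟩ := mem_image.mp hy
  rw [mem_filter, mem_powerset] at hT
  exact sum_le_sum_of_subset_of_nonneg hT.1 fun x hx _ => hv x hx

end BundleValue

section Demand
variable {X : Type*} [DecidableEq X]

def InDemand (k : ℕ) (v p : X → ℝ) (S : Finset X) : Prop :=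
  ∀ S', bundleValue k v S' - ∑ x ∈ S', p x ≤ bundleValue k v S - ∑ x ∈ S, p x

/-- With positive prices, a demanded bundle contains no item beyond the `k` it uses. -/
lemma InDemand.card_le_and_sum_le {k : ℕ} {v p : X → ℝ} {S : Finset X} (hp : ∀ x, 0 < p x)
    (hS : InDemand k v p S) :
    #S ≤ k ∧ ∀ S', #S' ≤ k → ∑ x ∈ S', (v x - p x) ≤ ∑ x ∈ S, (v x - p x) := by
  obtain ⟨T, hTS, hTk, hval⟩ := exists_subset_bundleValue_eq_sum k v S
  obtain rfl : S = T := by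
    by_contra hne
    obtain ⟨x, hxS, hxT⟩ := exists_of_ssubset (ssubset_of_subset_of_ne hTS (Ne.symm hne))
    have := sum_lt_sum_of_subset hTS hxS hxT (hp x) fun y _ _ => (hp y).le
    linarith [hS T, sum_le_bundleValue k v T Subset.rfl hTk]
  refine ⟨hTk, fun S' hS' => ?_⟩
  rw [sum_sub_distrib, sum_sub_distrib]
  linarith [hS S', sum_le_bundleValue k v S' Subset.rfl hS']

variable {s : X → ℝ} {k : ℕ} {C S : Finset X} {a b : X}

/-- Otherwise some missing item of `C` could replace an item outside `C ∪ {b}` or be added. -/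
lemma subset_of_forall_sum_le (hC : #C + 1 = k) (hCa : ∀ x ∈ C, s a < s x)
    (hCpos : ∀ x ∈ C, 0 < s x) (hle : ∀ y ∉ C, y ≠ b → s y ≤ s a) (hS : #S ≤ k)
    (hmax : ∀ S', #S' ≤ k → ∑ x ∈ S', s x ≤ ∑ x ∈ S, s x) : C ⊆ S := by
  intro c hc
  by_contra hcS
  rcases hS.lt_or_eq with hlt | heq
  · have := hmax (insert c S) (by rw [card_insert_of_notMem hcS]; omega)
    rw [sum_insert hcS] at this
    linarith [hCpos c hc]
  have hinter : #(S ∩ C) ≤ #(C.erase c) :=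
    card_le_card fun x hx => mem_erase.mpr ⟨fun h => hcS (h ▸ (mem_inter.mp hx).1),
      (mem_inter.mp hx).2⟩
  rw [card_erase_of_mem hc] at hinter
  have hsplit := card_sdiff_add_card_inter S C
  have htwo : 1 < #(S \ C) := by have := card_pos.mpr ⟨c, hc⟩; omega
  obtain ⟨z, hz, hzb⟩ := exists_mem_ne htwo b
  rw [mem_sdiff] at hz
  have hcz : c ∉ S.erase z := fun h => hcS (mem_of_mem_erase h)
  have := hmax (insert c (S.erase z))
    (by rw [card_insert_of_notMem hcz, card_erase_of_mem hz.1]; omega)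
  rw [sum_insert hcz, sum_erase_eq_sub hz.1] at this
  linarith [hle z hz.2 hzb, hCa c hc]

lemma eq_insert_or_eq_insert_of_forall_sum_le (hC : #C + 1 = k) (haC : a ∉ C)
    (ha : 0 < s a) (hCa : ∀ x ∈ C, s a < s x) (hothers : ∀ y ∉ C, y ≠ a → y ≠ b → s y < s a)
    (hS : #S ≤ k) (hmax : ∀ S', #S' ≤ k → ∑ x ∈ S', s x ≤ ∑ x ∈ S, s x) :
    S = insert a C ∨ S = insert b C := by
  have hCS : C ⊆ S := subset_of_forall_sum_le hC hCa (fun x hx => ha.trans (hCa x hx))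
    (fun y hy hyb => (eq_or_ne y a).elim (fun h => h ▸ le_rfl) fun h => (hothers y hy h hyb).le)
    hS hmax
  have haS := hmax (insert a C) (by rw [card_insert_of_notMem haC]; omega)
  rw [sum_insert haC] at haS
  obtain ⟨z, hz⟩ : ∃ z, S \ C = {z} := by
    rcases (S \ C).eq_empty_or_nonempty with he | hne
    · rw [Subset.antisymm (sdiff_eq_empty_iff_subset.mp he) hCS] at haS
      linarith
    · have := card_sdiff_of_subset hCS
      exact card_eq_one.mp (by have := card_pos.mpr hne; omega)
  have hzC : z ∉ C := (mem_sdiff.mp (hz ▸ mem_singleton_self z)).2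
  have hSz : S = insert z C := by rw [insert_eq, ← hz, sdiff_union_of_subset hCS]
  by_contra! hne
  rw [hSz, sum_insert hzC] at haS
  linarith [hothers z hzC (fun h => hne.1 (h ▸ hSz)) fun h => hne.2 (h ▸ hSz)]

lemma InDemand.eq_insert_or_eq_insert {v p : X → ℝ} (hp : ∀ x, 0 < p x)
    (hS : InDemand k v p S) (hC : #C + 1 = k) (haC : a ∉ C) (ha : 0 < v a - p a)
    (hCa : ∀ x ∈ C, v a - p a < v x - p x)
    (hothers : ∀ y ∉ C, y ≠ a → y ≠ b → v y - p y < v a - p a) :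
    S = insert a C ∨ S = insert b C :=
  have ⟨hSk, hmax⟩ := hS.card_le_and_sum_le hp
  eq_insert_or_eq_insert_of_forall_sum_le hC haC ha hCa hothers hSk hmax

end Demand

section WalkWeight
variable {V : Type*} (c : V → V → ℝ)

/-- The weight of the walk `a → l₁ → ⋯ → lₘ → b`. -/
def walkWeight : V → List V → V → ℝ
  | a, [], b => c a b
  | a, x :: l, b => c a x + walkWeight x l b

@[simp] lemma walkWeight_nil (a b : V) : walkWeight c a [] b = c a b := rfl

@[simp] lemma walkWeight_cons (a x : V) (l : List V) (b : V) :
    walkWeight c a (x :: l) b = c a x + walkWeight c x l b := rfl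

lemma walkWeight_append (a : V) (l₁ : List V) (x : V) (l₂ : List V) (b : V) :
    walkWeight c a (l₁ ++ x :: l₂) b = walkWeight c a l₁ x + walkWeight c x l₂ b := by
  induction l₁ generalizing a with
  | nil => rfl
  | cons y l₁ ih => simp [ih, add_assoc]

lemma walkWeight_eq_sum_zipWith (a : V) (l : List V) (b : V) :
    walkWeight c a l b = (List.zipWith c (a :: l) (l ++ [b])).sum := by
  induction l generalizing a with
  | nil => simp
  | cons x l ih => simp [ih]

lemma List.map_formPerm_eq_rotate [DecidableEq V] {l : List V} (hl : l.Nodup) :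
    l.map l.formPerm = l.rotate 1 := by
  refine List.ext_getElem (by simp) fun i _ _ => ?_
  rw [List.getElem_map, List.formPerm_apply_getElem _ hl, List.getElem_rotate]

lemma walkWeight_eq_sum_formPerm [DecidableEq V] {a : V} {l : List V} (hl : (a :: l).Nodup) :
    walkWeight c a l a = ∑ j ∈ (a :: l).toFinset, c j ((a :: l).formPerm j) := by
  have hzip : List.zipWith c (a :: l) ((a :: l).map (a :: l).formPerm) =
      (a :: l).map fun j => c j ((a :: l).formPerm j) := by
    rw [List.zipWith_map_right, List.zipWith_self]
  rw [List.sum_toFinset _ hl, walkWeight_eq_sum_zipWith, ← hzip, List.map_formPerm_eq_rotate hl,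
    List.rotate_cons_succ, List.rotate_zero]

lemma walkWeight_neg_of_nodup [Fintype V] [DecidableEq V] (hloop : ∀ a, c a a < 0)
    (hperm : ∀ σ : Equiv.Perm V, σ ≠ 1 → ∑ j ∈ σ.support, c j (σ j) < 0)
    {a : V} {l : List V} (hl : (a :: l).Nodup) : walkWeight c a l a < 0 := by
  cases l with
  | nil => exact hloop a
  | cons b l =>
    have hne : (a :: b :: l).formPerm ≠ 1 := by
      rw [Ne, List.formPerm_eq_one_iff _ hl]
      simp
    rw [walkWeight_eq_sum_formPerm c hl, ← List.support_formPerm_of_nodup _ hl (by simp)]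
    exact hperm _ hne

/-- A closed walk that repeats a vertex splits there into two shorter closed walks. -/
lemma walkWeight_neg_of_forall_nodup
    (hcyc : ∀ a l, (a :: l).Nodup → walkWeight c a l a < 0) (a : V) (l : List V) :
    walkWeight c a l a < 0 := by
  induction hn : l.length using Nat.strong_induction_on generalizing a l with
  | _ n ih =>
  have ih' : ∀ b l', l'.length < n → walkWeight c b l' b < 0 := fun b l' h => ih _ h b l' rfl
  subst hn
  by_cases hl : (a :: l).Nodup
  · exact hcyc a l hl
  obtain ⟨x, hx⟩ := not_forall_not.mp (mt List.nodup_iff_sublist.mpr hl)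
  obtain ⟨r₁, r₂, hr, hx₁, hx₂⟩ := List.cons_sublist_iff.mp hx
  obtain ⟨t, m₁, rfl⟩ := List.append_of_mem hx₁
  obtain ⟨m₂, r, rfl⟩ := List.append_of_mem (List.singleton_sublist.mp hx₂)
  rcases t with _ | ⟨y, t⟩
  · simp only [List.nil_append, List.cons_append, List.cons.injEq] at hr
    obtain ⟨rfl, rfl⟩ := hr
    rw [← List.append_assoc, walkWeight_append]
    have := ih' a (m₁ ++ m₂) (by simp only [List.length_append, List.length_cons]; omega)
    have := ih' a r (by simp only [List.length_append, List.length_cons]; omega)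
    linarith
  · simp only [List.cons_append, List.cons.injEq] at hr
    obtain ⟨rfl, rfl⟩ := hr
    rw [show t ++ x :: m₁ ++ (m₂ ++ x :: r) = t ++ x :: ((m₁ ++ m₂) ++ x :: r) by simp,
      walkWeight_append, walkWeight_append]
    have := ih' x (m₁ ++ m₂) (by simp only [List.length_append, List.length_cons]; omega)
    have := ih' a (t ++ x :: r) (by simp only [List.length_append, List.length_cons]; omega)
    rw [walkWeight_append] at this
    linarith

lemma exists_walkWeight_max_detour (v₀ a : V) (l : List V) (b : V) :
    ∃ m : List V, (∀ x ∈ m, x ∈ l ∨ x = v₀) ∧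
      walkWeight (fun x y => max (c x y) (c x v₀ + c v₀ y)) a l b = walkWeight c a m b := by
  induction l generalizing a with
  | nil =>
    rcases le_total (c a v₀ + c v₀ b) (c a b) with h | h
    · exact ⟨[], by simp, by simp [h]⟩
    · exact ⟨[v₀], by simp, by simp [h]⟩
  | cons x l ih =>
    obtain ⟨m, hm, hw⟩ := ih x
    have hm' : ∀ y ∈ m, y ∈ x :: l ∨ y = v₀ := fun y hy => by
      rcases hm y hy with hy | hy <;> simp [hy]
    rcases le_total (c a v₀ + c v₀ x) (c a x) with h | h
    · refine ⟨x :: m, ?_, by simp [hw, h]⟩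
      rintro y (_ | ⟨_, hy⟩)
      exacts [by simp, hm' y hy]
    · refine ⟨v₀ :: x :: m, ?_, by simp [hw, h, add_assoc]⟩
      rintro y (_ | ⟨_, _ | ⟨_, hy⟩⟩)
      exacts [by simp, by simp, hm' y hy]

/-- Eliminate a vertex `v₀`, letting each arc `x → y` take the better of itself and the detour
through `v₀`; a potential of the smaller graph then leaves room for a value at `v₀`. -/
theorem exists_potential_of_walkWeight_neg [DecidableEq V] (s : Finset V)
    (hneg : ∀ a ∈ s, ∀ l : List V, (∀ x ∈ l, x ∈ s) → walkWeight c a l a < 0) :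
    ∃ d : V → ℝ, ∀ a ∈ s, ∀ b ∈ s, d a + c a b < d b := by
  induction s using Finset.induction_on generalizing c with
  | empty => exact ⟨0, by simp⟩
  | insert v₀ s hv₀ ih =>
    set c' : V → V → ℝ := fun x y => max (c x y) (c x v₀ + c v₀ y)
    obtain ⟨d, hd⟩ := ih c' fun a ha l hl => by
      obtain ⟨m, hm, hw⟩ := exists_walkWeight_max_detour c v₀ a l a
      rw [hw]
      refine hneg a (mem_insert_of_mem ha) m fun x hx => ?_
      rcases hm x hx with hx | rfl
      exacts [mem_insert_of_mem (hl x hx), mem_insert_self _ _]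
    obtain ⟨t, hlt, hgt⟩ : ∃ t, (∀ a ∈ s, d a + c a v₀ < t) ∧ ∀ b ∈ s, t < d b - c v₀ b := by
      rcases s.eq_empty_or_nonempty with rfl | hs
      · exact ⟨0, by simp⟩
      obtain ⟨t, ht⟩ := Finset.exists_between (hs.image fun a => d a + c a v₀)
        (hs.image fun b => d b - c v₀ b) (by
          simp only [mem_image, forall_exists_index, and_imp]
          rintro _ a ha rfl _ b hb rfl
          linarith [hd a ha b hb, le_max_right (c a b) (c a v₀ + c v₀ b)])
      exact ⟨t, fun a ha => ht.1 _ (mem_image_of_mem _ ha),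
        fun b hb => ht.2 _ (mem_image_of_mem _ hb)⟩
    have hloop : c v₀ v₀ < 0 := hneg v₀ (mem_insert_self _ _) [] (by simp)
    have hne : ∀ a ∈ s, a ≠ v₀ := fun a ha h => hv₀ (h ▸ ha)
    refine ⟨Function.update d v₀ t, ?_⟩
    simp only [mem_insert]
    rintro a (rfl | ha) b (rfl | hb)
    · simpa using hloop
    · simp only [Function.update_self, Function.update_of_ne (hne b hb)]
      linarith [hgt b hb]
    · simp only [Function.update_self, Function.update_of_ne (hne a ha)]
      exact hlt a ha
    · simp only [Function.update_of_ne (hne a ha), Function.update_of_ne (hne b hb)]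
      linarith [hd a ha b hb, le_max_left (c a b) (c a v₀ + c v₀ b)]

theorem exists_potential_of_sum_support_neg [Fintype V] [DecidableEq V] (hloop : ∀ a, c a a < 0)
    (hperm : ∀ σ : Equiv.Perm V, σ ≠ 1 → ∑ j ∈ σ.support, c j (σ j) < 0) :
    ∃ d : V → ℝ, ∀ a b, d a + c a b < d b := by
  obtain ⟨d, hd⟩ := exists_potential_of_walkWeight_neg c univ fun a _ l _ =>
    walkWeight_neg_of_forall_nodup c (fun _ _ => walkWeight_neg_of_nodup c hloop hperm) a l
  exact ⟨d, fun a b => hd a (mem_univ a) b (mem_univ b)⟩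

end WalkWeight

lemma exists_mem_imp_of_nonempty {α : Type*} {s : Finset α} (hs : s.Nonempty) (P : α → Prop) :
    ∃ a ∈ s, (∃ b ∈ s, P b) → P a := by
  by_cases hP : ∃ b ∈ s, P b
  · obtain ⟨b, hb, hPb⟩ := hP
    exact ⟨b, hb, fun _ => hPb⟩
  · obtain ⟨a, ha⟩ := hs
    exact ⟨a, ha, fun h => absurd h hP⟩

lemma exists_pos_forall_add_le {ι : Type*} [Finite ι] {f g : ι → ℝ} (h : ∀ i, f i < g i) :
    ∃ ε > 0, ∀ i, f i + ε ≤ g i := by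
  rcases isEmpty_or_nonempty ι with hι | hι
  · exact ⟨1, one_pos, fun i => isEmptyElim i⟩
  obtain ⟨i₀, hi₀⟩ := Finite.exists_min fun i => g i - f i
  exact ⟨g i₀ - f i₀, by linarith [h i₀], fun i => by linarith [hi₀ i]⟩

section Permutations
variable {α ι : Type*} [DecidableEq ι] {f g : α → ι}

lemma card_filter_eq_of_comp_eq {G : Equiv.Perm α} (hG : ∀ a, f (G a) = g a) {A : Finset α}
    (hA : ∀ a, G a ∈ A ↔ a ∈ A) (i : ι) : #{a ∈ A | f a = i} = #{a ∈ A | g a = i} := by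
  refine card_nbij' G.symm G (fun a ha => ?_) (fun a ha => ?_) (fun a _ => by simp)
    (fun a _ => by simp)
  · simp only [coe_filter, Set.mem_ofPred_eq] at ha ⊢
    rw [← hA, ← hG]
    simpa using ha
  · simp only [coe_filter, Set.mem_ofPred_eq] at ha ⊢
    rw [hA, hG]
    exact ha

/-- The orbits of `G` are balanced, so `G` has a single orbit. -/
lemma sign_eq_of_comp_eq [Fintype α] [DecidableEq α] [Nonempty α] (hfg : ∀ a, f a ≠ g a)
    (hmin : ∀ A : Finset α, A.Nonempty → (∀ i, #{a ∈ A | f a = i} = #{a ∈ A | g a = i}) →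
      A = univ)
    {G : Equiv.Perm α} (hG : ∀ a, f (G a) = g a) :
    Equiv.Perm.sign G = -(-1) ^ Fintype.card α := by
  have hfix : ∀ a, G a ≠ a := fun a h => hfg a (by rw [← hG, h])
  obtain ⟨z⟩ := ‹Nonempty α›
  have horbit : ({a | G.SameCycle z a} : Finset α) = univ :=
    hmin _ ⟨z, mem_filter.mpr ⟨mem_univ z, Equiv.Perm.SameCycle.refl G z⟩⟩
      (card_filter_eq_of_comp_eq hG fun a => by
        simp only [mem_filter, mem_univ, true_and, Equiv.Perm.sameCycle_apply_right])
  have hcycle : G.IsCycle :=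
    ⟨z, hfix z, fun a _ => by simpa using (Finset.ext_iff.mp horbit a).mpr (mem_univ a)⟩
  have hsupp : G.support = univ := eq_univ_of_forall fun a => by simpa using hfix a
  rw [hcycle.sign, hsupp, card_univ]

/-- If `f x = f y` with `x ≠ y`, composing a `G` with `f ∘ G = g` with the transposition of `x`
and `y` gives another one, of the opposite sign. -/
theorem injective_of_forall_balanced_eq_univ [Fintype α] [DecidableEq α] (hfg : ∀ a, f a ≠ g a)
    (hcard : ∀ i, #{a | g a = i} = #{a | f a = i})
    (hmin : ∀ A : Finset α, A.Nonempty → (∀ i, #{a ∈ A | f a = i} = #{a ∈ A | g a = i}) →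
      A = univ) :
    Function.Injective f := by
  intro x y hxy
  by_contra hne
  have : Nonempty α := ⟨x⟩
  let G : Equiv.Perm α := Equiv.ofFiberEquiv (f := g) (g := f) fun i =>
    Fintype.equivOfCardEq (by rw [Fintype.card_subtype, Fintype.card_subtype, hcard])
  have hG : ∀ a, f (G a) = g a := Equiv.ofFiberEquiv_map _
  have hG' : ∀ a, f ((Equiv.swap x y * G) a) = g a := fun a => by
    rw [Equiv.Perm.mul_apply, Equiv.apply_swap_eq_self hxy, hG]
  have hsign := sign_eq_of_comp_eq hfg hmin hG'
  rw [Equiv.Perm.sign_mul, Equiv.Perm.sign_swap hne, sign_eq_of_comp_eq hfg hmin hG] at hsign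
  rcases Int.units_eq_one_or ((-1 : ℤˣ) ^ Fintype.card α) with h | h <;>
    rw [h] at hsign <;> exact absurd hsign (by decide)

end Permutations

lemma card_filter_map_subtype {X : Type*} {p : X → Prop} [DecidablePred p]
    (A : Finset {x // p x}) (q : X → Prop) [DecidablePred q] :
    #{a ∈ A | q a.1} = #{x ∈ A.map (Function.Embedding.subtype p) | q x} := by
  rw [filter_map, card_map]
  rfl

section Assignments
variable {X I : Type*} [Fintype X] [DecidableEq I]

def bundles (ω : X → I) (i : I) : Finset X := {x | ω x = i}

@[simp] lemma mem_bundles {ω : X → I} {x : X} {i : I} : x ∈ bundles ω i ↔ ω x = i := by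
  simp [bundles]

lemma bundles_injective : Function.Injective (bundles : (X → I) → I → Finset X) := by
  intro ω ω' h
  funext x
  have : x ∈ bundles ω' (ω x) := h ▸ mem_bundles.mpr rfl
  exact (mem_bundles.mp this).symm

def IsBalanced (k : I → ℕ) (ω : X → I) : Prop := ∀ i, #(bundles ω i) = k i

def welfareOf (v : I → X → ℝ) (ω : X → I) : ℝ := ∑ x, v (ω x) x

def IsOptimalAssignment (k : I → ℕ) (v : I → X → ℝ) (ω : X → I) : Prop :=
  IsBalanced k ω ∧ ∀ ω', IsBalanced k ω' → welfareOf v ω' ≤ welfareOf v ω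

variable {k : I → ℕ} {v : I → X → ℝ}

lemma IsOptimalAssignment.of_le {ω ω' : X → I} (h : IsOptimalAssignment k v ω)
    (h' : IsBalanced k ω') (hle : welfareOf v ω ≤ welfareOf v ω') :
    IsOptimalAssignment k v ω' :=
  ⟨h', fun ω'' h'' => (h.2 ω'' h'').trans hle⟩

lemma isAllocation_bundles {ω : X → I} (h : IsBalanced k ω) : IsAllocation k (bundles ω) :=
  ⟨h, fun x => ⟨ω x, mem_bundles.mpr rfl, fun _ hi => (mem_bundles.mp hi).symm⟩⟩

lemma IsAllocation.exists_eq_bundles {O : I → Finset X} (h : IsAllocation k O) :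
    ∃ ω : X → I, IsBalanced k ω ∧ bundles ω = O := by
  choose ω hω using fun x => (h.2 x).exists
  have hO : bundles ω = O := by
    funext i
    ext x
    exact ⟨fun hx => mem_bundles.mp hx ▸ hω x,
      fun hx => mem_bundles.mpr ((h.2 x).unique (hω x) hx)⟩
  exact ⟨ω, fun i => hO ▸ h.1 i, hO⟩

variable [DecidableEq X] [Fintype I]

lemma socialWelfare_bundles (hv : ∀ i x, 0 ≤ v i x) {ω : X → I} (h : IsBalanced k ω) :
    socialWelfare v k (bundles ω) = welfareOf v ω := by
  unfold socialWelfare welfareOf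
  rw [← sum_fiberwise univ ω]
  refine sum_congr rfl fun i _ => ?_
  rw [bundleValue_eq_sum _ _ _ (h i).le fun x _ => hv i x]
  exact sum_congr (by ext; simp) fun x hx => by simp_all

lemma isOptimal_bundles_iff (hv : ∀ i x, 0 ≤ v i x) {ω : X → I} :
    IsOptimal v k (bundles ω) ↔ IsOptimalAssignment k v ω := by
  constructor
  · intro h
    have hω : IsBalanced k ω := h.1.1
    refine ⟨hω, fun ω' hω' => ?_⟩
    rw [← socialWelfare_bundles hv hω', ← socialWelfare_bundles hv hω]
    exact h.2 _ (isAllocation_bundles hω')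
  · intro h
    refine ⟨isAllocation_bundles h.1, fun O hO => ?_⟩
    obtain ⟨ω', hω', rfl⟩ := hO.exists_eq_bundles
    rw [socialWelfare_bundles hv hω', socialWelfare_bundles hv h.1]
    exact h.2 ω' hω'

end Assignments

structure OptimalPair {X I : Type*} [Fintype X] [DecidableEq I] (k : I → ℕ) (v : I → X → ℝ)
    (ω₁ ω₂ : X → I) : Prop where
  left : IsOptimalAssignment k v ω₁
  right : IsOptimalAssignment k v ω₂
  eq_or_eq : ∀ ω, IsOptimalAssignment k v ω → ω = ω₁ ∨ ω = ω₂

lemma exists_optimalPair {X I : Type*} [Fintype X] [DecidableEq X] [Fintype I] [DecidableEq I]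
    {k : I → ℕ} {v : I → X → ℝ} (hv : ∀ i x, 0 ≤ v i x)
    (hex : ∃ O : I → Finset X, IsAllocation k O)
    (htwo : ∀ O₁ O₂ O₃ : I → Finset X, IsOptimal v k O₁ → IsOptimal v k O₂ → IsOptimal v k O₃ →
      O₁ = O₂ ∨ O₁ = O₃ ∨ O₂ = O₃) :
    ∃ ω₁ ω₂, OptimalPair k v ω₁ ω₂ := by
  classical
  obtain ⟨O, hO⟩ := hex
  obtain ⟨ω₀, hω₀, -⟩ := hO.exists_eq_bundles
  obtain ⟨ω₁, hω₁, hmax⟩ := exists_max_image {ω : X → I | IsBalanced k ω} (welfareOf v)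
    ⟨ω₀, by simpa using hω₀⟩
  have h₁ : IsOptimalAssignment k v ω₁ :=
    ⟨by simpa using hω₁, fun ω hω => hmax ω (by simpa using hω)⟩
  by_cases hunique : ∀ ω, IsOptimalAssignment k v ω → ω = ω₁
  · exact ⟨ω₁, ω₁, h₁, h₁, fun ω hω => Or.inl (hunique ω hω)⟩
  obtain ⟨ω₂, h₂, hne⟩ : ∃ ω₂, IsOptimalAssignment k v ω₂ ∧ ω₂ ≠ ω₁ := by
    simpa only [not_forall, exists_prop] using hunique
  refine ⟨ω₁, ω₂, h₁, h₂, fun ω hω => ?_⟩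
  rw [← isOptimal_bundles_iff hv] at h₁ h₂ hω
  rcases htwo _ _ _ h₁ h₂ hω with h | h | h
  · exact absurd (bundles_injective h).symm hne
  · exact Or.inl (bundles_injective h).symm
  · exact Or.inr (bundles_injective h).symm

section Mixtures
variable {X I : Type*} [Fintype X] [DecidableEq X] {ω₁ ω₂ : X → I}

lemma card_bundles_eq_add [DecidableEq I] (ω : X → I) (A : Finset X) (i : I) :
    #(bundles ω i) = #{x ∈ A | ω x = i} + #{x ∈ Aᶜ | ω x = i} := by
  rw [← card_union_of_disjoint (disjoint_filter_filter disjoint_compl_right), ← filter_union,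
    union_compl]
  rfl

lemma IsBalanced.piecewise [DecidableEq I] {k : I → ℕ} (h : IsBalanced k ω₁) {A : Finset X}
    (hA : ∀ i, #{x ∈ A | ω₁ x = i} = #{x ∈ A | ω₂ x = i}) :
    IsBalanced k (A.piecewise ω₂ ω₁) := by
  intro i
  have hin : {x ∈ A | A.piecewise ω₂ ω₁ x = i} = {x ∈ A | ω₂ x = i} :=
    filter_congr fun x hx => by rw [piecewise_eq_of_mem _ _ _ hx]
  have hout : {x ∈ Aᶜ | A.piecewise ω₂ ω₁ x = i} = {x ∈ Aᶜ | ω₁ x = i} :=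
    filter_congr fun x hx => by rw [piecewise_eq_of_notMem _ _ _ (mem_compl.mp hx)]
  rw [card_bundles_eq_add _ A, hin, hout, ← hA, ← card_bundles_eq_add, h]

lemma welfareOf_piecewise_add_welfareOf_piecewise (v : I → X → ℝ) (A : Finset X) :
    welfareOf v (A.piecewise ω₂ ω₁) + welfareOf v (A.piecewise ω₁ ω₂) =
      welfareOf v ω₁ + welfareOf v ω₂ := by
  simp only [welfareOf, ← sum_add_distrib]
  refine sum_congr rfl fun x _ => ?_
  by_cases hx : x ∈ A <;> simp [hx, add_comm]

end Mixtures

namespace OptimalPair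
variable {X I : Type*} [Fintype X] [DecidableEq I] {k : I → ℕ} {v : I → X → ℝ} {ω₁ ω₂ : X → I}

lemma symm (h : OptimalPair k v ω₁ ω₂) : OptimalPair k v ω₂ ω₁ :=
  ⟨h.right, h.left, fun ω hω => (h.eq_or_eq ω hω).symm⟩

lemma welfareOf_eq (h : OptimalPair k v ω₁ ω₂) : welfareOf v ω₂ = welfareOf v ω₁ :=
  le_antisymm (h.left.2 _ h.right.1) (h.right.2 _ h.left.1)

variable [DecidableEq X]

/-- The two mixtures of `ω₁` and `ω₂` on `A` have the same total welfare as `ω₁` and `ω₂`, so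
both are optimal. -/
lemma mem_of_balanced (h : OptimalPair k v ω₁ ω₂) {A : Finset X} (hA : ∀ x ∈ A, ω₁ x ≠ ω₂ x)
    (hne : A.Nonempty) (hbal : ∀ i, #{x ∈ A | ω₁ x = i} = #{x ∈ A | ω₂ x = i}) {x : X}
    (hx : ω₁ x ≠ ω₂ x) : x ∈ A := by
  have hopt : IsOptimalAssignment k v (A.piecewise ω₂ ω₁) :=
    h.left.of_le (h.left.1.piecewise hbal) <| by
      linarith [welfareOf_piecewise_add_welfareOf_piecewise (ω₁ := ω₁) (ω₂ := ω₂) v A,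
        h.right.2 _ (h.right.1.piecewise fun i => (hbal i).symm), h.welfareOf_eq]
  rcases h.eq_or_eq _ hopt with h₁ | h₂
  · obtain ⟨y, hy⟩ := hne
    have := congrFun h₁ y
    rw [piecewise_eq_of_mem _ _ _ hy] at this
    exact absurd this.symm (hA y hy)
  · by_contra hxA
    have := congrFun h₂ x
    rw [piecewise_eq_of_notMem _ _ _ hxA] at this
    exact hx this

lemma card_filter_ne_eq (h : OptimalPair k v ω₁ ω₂) (i : I) :
    #{x | ω₁ x ≠ ω₂ x ∧ ω₁ x = i} = #{x | ω₁ x ≠ ω₂ x ∧ ω₂ x = i} := by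
  set M : Finset X := {x | ω₁ x ≠ ω₂ x}
  have hM : {x ∈ Mᶜ | ω₁ x = i} = {x ∈ Mᶜ | ω₂ x = i} :=
    filter_congr fun x hx => by simp_all [M]
  have := card_bundles_eq_add ω₁ M i
  rw [h.left.1 i, hM, ← h.right.1 i, card_bundles_eq_add ω₂ M i] at this
  simpa only [filter_filter, M] using (Nat.add_right_cancel this).symm

theorem injOn_left (h : OptimalPair k v ω₁ ω₂) : Set.InjOn ω₁ {x | ω₁ x ≠ ω₂ x} := by
  intro x hx y hy hxy
  have hmap : ∀ A : Finset {x // ω₁ x ≠ ω₂ x}, ∀ x ∈ A.map (Function.Embedding.subtype _),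
      ω₁ x ≠ ω₂ x := fun A x hx => by
    obtain ⟨a, -, rfl⟩ := mem_map.mp hx
    exact a.2
  refine congrArg Subtype.val (injective_of_forall_balanced_eq_univ
    (f := fun a : {x // ω₁ x ≠ ω₂ x} => ω₁ a.1) (g := fun a => ω₂ a.1) (fun a => a.2)
    (fun i => ?_) (fun A hA hbal => ?_) (a₁ := ⟨x, hx⟩) (a₂ := ⟨y, hy⟩) hxy)
  · rw [card_filter_map_subtype univ (ω₂ · = i), card_filter_map_subtype univ (ω₁ · = i),
      univ_map_subtype, filter_filter, filter_filter]
    exact (h.card_filter_ne_eq i).symm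
  · refine eq_univ_of_forall fun a => ?_
    obtain ⟨b, hb, hba⟩ := mem_map.mp (h.mem_of_balanced (hmap A) (map_nonempty.mpr hA)
      (fun i => by rw [← card_filter_map_subtype, ← card_filter_map_subtype]; exact hbal i) a.2)
    exact Subtype.ext hba ▸ hb

lemma exists_disagree_of_incoming (h : OptimalPair k v ω₁ ω₂) {b : X} {i : I}
    (hb₁ : ω₁ b ≠ i) (hb₂ : ω₂ b = i) : ∃ a ∈ bundles ω₁ i, ω₁ a ≠ ω₂ a := by
  have : 0 < #{x | ω₁ x ≠ ω₂ x ∧ ω₁ x = i} :=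
    h.card_filter_ne_eq i ▸ card_pos.mpr ⟨b, by simp [hb₂, hb₁]⟩
  obtain ⟨a, ha⟩ := card_pos.mp this
  exact ⟨a, mem_bundles.mpr (mem_filter.mp ha).2.2, (mem_filter.mp ha).2.1⟩

lemma bundles_right_eq (h : OptimalPair k v ω₁ ω₂) {a b : X} {i : I}
    (hb₁ : ω₁ b ≠ i) (hb₂ : ω₂ b = i) (ha₁ : ω₁ a = i) (ha : ω₁ a ≠ ω₂ a) :
    bundles ω₂ i = insert b ((bundles ω₁ i).erase a) := by
  ext x
  simp only [mem_bundles, mem_insert, mem_erase]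
  constructor
  · intro hx
    by_cases hxM : ω₁ x = ω₂ x
    · exact Or.inr ⟨fun hxa => ha (hxa ▸ hxM), hxM ▸ hx⟩
    · exact Or.inl (h.symm.injOn_left (Ne.symm hxM) (Ne.symm (hb₂ ▸ hb₁)) (hx.trans hb₂.symm))
  · rintro (rfl | ⟨hxa, hx⟩)
    · exact hb₂
    · by_contra hxM
      exact hxa (h.injOn_left (fun h' => hxM (h' ▸ hx)) ha (hx.trans ha₁.symm))

/-- Here `a` is the item player `i` gives away under `ω₂`, if any. -/
lemma inDemand_eq_bundles (h : OptimalPair k v ω₁ ω₂) {p : X → ℝ} (hp : ∀ x, 0 < p x)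
    {i : I} {a : X} (haC : a ∈ bundles ω₁ i)
    (ha : (∃ b ∈ bundles ω₁ i, ω₁ b ≠ ω₂ b) → ω₁ a ≠ ω₂ a) (hpos : 0 < v i a - p a)
    (hown : ∀ x ∈ bundles ω₁ i, x ≠ a → v i a - p a < v i x - p x)
    (hforeign : ∀ y, ω₁ y ≠ i → ω₂ y ≠ i → v i y - p y < v i a - p a)
    {S : Finset X} (hS : InDemand (k i) (v i) p S) : S = bundles ω₁ i ∨ S = bundles ω₂ i := by
  set C := (bundles ω₁ i).erase a
  have hC : #C + 1 = k i := by
    rw [card_erase_of_mem haC, ← h.left.1 i]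
    have := card_pos.mpr ⟨a, haC⟩
    omega
  have key : ∀ b, (∀ y, ω₁ y ≠ i → ω₂ y = i → y = b) → S = bundles ω₁ i ∨ S = insert b C := by
    intro b hb
    rw [← insert_erase haC]
    refine hS.eq_insert_or_eq_insert hp hC (notMem_erase a _) hpos
      (fun x hx => hown x (mem_of_mem_erase hx) (ne_of_mem_erase hx))
      fun y hyC hya hyb => ?_
    have hy₁ : ω₁ y ≠ i := fun hy => hyC (mem_erase.mpr ⟨hya, mem_bundles.mpr hy⟩)
    exact hforeign y hy₁ fun hy₂ => hyb (hb y hy₁ hy₂)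
  by_cases hin : ∃ b, ω₁ b ≠ i ∧ ω₂ b = i
  · obtain ⟨b, hb₁, hb₂⟩ := hin
    rw [h.bundles_right_eq hb₁ hb₂ (mem_bundles.mp haC)
      (ha (h.exists_disagree_of_incoming hb₁ hb₂))]
    exact key b fun y hy₁ hy₂ => h.symm.injOn_left (fun h' => hy₁ (h'.symm.trans hy₂))
      (fun h' => hb₁ (h'.symm.trans hb₂)) (hy₂.trans hb₂.symm)
  · obtain h' | h' := key a fun y hy₁ hy₂ => absurd ⟨y, hy₁, hy₂⟩ hin
    exacts [Or.inl h', Or.inl (h'.trans (insert_erase haC))]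

end OptimalPair

def trade {X I : Type*} [DecidableEq X] (ω : X → I) (item : I → I → X) (σ : Equiv.Perm I) :
    X → I :=
  fun y => if y = item (ω y) (σ (ω y)) then σ (ω y) else ω y

section Trade
variable {X I : Type*} [Fintype X] [DecidableEq X] [DecidableEq I] {ω : X → I}
  {item : I → I → X} (σ : Equiv.Perm I)

lemma bundles_trade (hitem : ∀ j i, ω (item j i) = j) (i : I) :
    bundles (trade ω item σ) i = insert (item (σ⁻¹ i) i) ((bundles ω i).erase (item i (σ i))) := by
  ext y
  simp only [mem_bundles, mem_insert, mem_erase, trade]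
  split_ifs with hy
  · constructor
    · intro h
      left
      rw [hy, ← h]
      simp
    · rintro (rfl | ⟨hne, rfl⟩)
      · simp [hitem]
      · exact absurd hy hne
  · constructor
    · rintro rfl
      exact Or.inr ⟨hy, rfl⟩
    · rintro (rfl | ⟨-, h⟩)
      · simp [hitem] at hy
      · exact h

lemma IsBalanced.trade {k : I → ℕ} (hitem : ∀ j i, ω (item j i) = j) (h : IsBalanced k ω) :
    IsBalanced k (trade ω item σ) := by
  intro i
  have hmem : item i (σ i) ∈ bundles ω i := mem_bundles.mpr (hitem _ _)
  rw [bundles_trade σ hitem]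
  by_cases hfix : σ i = i
  · rw [hfix] at hmem
    rw [show σ⁻¹ i = i by rw [Equiv.Perm.inv_eq_iff_eq, hfix], hfix, insert_erase hmem, h]
  have hnot : item (σ⁻¹ i) i ∉ (bundles ω i).erase (item i (σ i)) := fun hm => by
    have := mem_bundles.mp (mem_of_mem_erase hm)
    rw [hitem, Equiv.Perm.inv_eq_iff_eq] at this
    exact hfix this.symm
  rw [card_insert_of_notMem hnot, card_erase_of_mem hmem, h]
  have := h i ▸ card_pos.mpr ⟨_, hmem⟩
  omega

lemma welfareOf_trade [Fintype I] (hitem : ∀ j i, ω (item j i) = j) (v : I → X → ℝ) :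
    welfareOf v (trade ω item σ) =
      welfareOf v ω + ∑ j, (v (σ j) (item j (σ j)) - v j (item j (σ j))) := by
  have hpoint : ∀ y, v (trade ω item σ y) y = v (ω y) y +
      if y = item (ω y) (σ (ω y)) then v (σ (ω y)) y - v (ω y) y else 0 := fun y => by
    unfold trade
    split_ifs <;> ring
  simp only [welfareOf, hpoint, sum_add_distrib, add_right_inj]
  rw [← sum_fiberwise univ ω]
  refine sum_congr rfl fun j _ => ?_
  rw [sum_congr rfl fun y hy => by rw [(mem_filter.mp hy).2], sum_ite_eq']
  simp [hitem]

end Trade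

/-- The welfare change of moving `y` from its `ω₁`-owner to `i`, except that only the loss is
counted when `i` owns `y` under `ω₁` or `ω₂`: an exchange cycle of total gain zero then has to
produce a third optimal allocation. -/
def exchangeGain {X I : Type*} [DecidableEq I] (v : I → X → ℝ) (ω₁ ω₂ : X → I) (y : X) (i : I) :
    ℝ :=
  if ω₁ y = i ∨ ω₂ y = i then -v (ω₁ y) y else v i y - v (ω₁ y) y

section Prices
variable {X I : Type*} [DecidableEq I] {v : I → X → ℝ} {ω₁ ω₂ : X → I}

lemma exchangeGain_le (hv : ∀ i x, 0 < v i x) (y : X) (i : I) :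
    exchangeGain v ω₁ ω₂ y i ≤ v i y - v (ω₁ y) y := by
  unfold exchangeGain
  split_ifs <;> linarith [hv i y]

lemma neg_le_exchangeGain (hv : ∀ i x, 0 < v i x) (y : X) (i : I) :
    -v (ω₁ y) y ≤ exchangeGain v ω₁ ω₂ y i := by
  unfold exchangeGain
  split_ifs <;> linarith [hv i y]

variable [Fintype X] [DecidableEq X] [Fintype I] {k : I → ℕ}

theorem OptimalPair.sum_support_exchangeGain_neg (hv : ∀ i x, 0 < v i x)
    (h : OptimalPair k v ω₁ ω₂) {item : I → I → X} (hitem : ∀ j i, ω₁ (item j i) = j)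
    {σ : Equiv.Perm I} (hσ : σ ≠ 1) :
    ∑ j ∈ σ.support, exchangeGain v ω₁ ω₂ (item j (σ j)) (σ j) < 0 := by
  set change : I → ℝ := fun j => v (σ j) (item j (σ j)) - v j (item j (σ j))
  have hwelfare :
      welfareOf v (trade ω₁ item σ) = welfareOf v ω₁ + ∑ j ∈ σ.support, change j := by
    rw [welfareOf_trade σ hitem, ← sum_subset (subset_univ σ.support) fun j _ hj => by
      simp [Equiv.Perm.notMem_support.mp hj]]
  have hle : ∀ j ∈ σ.support, exchangeGain v ω₁ ω₂ (item j (σ j)) (σ j) ≤ change j :=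
    fun j _ => by
      simpa only [hitem] using exchangeGain_le (ω₁ := ω₁) (ω₂ := ω₂) hv (item j (σ j)) (σ j)
  by_contra! hnonneg
  have hopt : IsOptimalAssignment k v (trade ω₁ item σ) :=
    h.left.of_le (h.left.1.trade σ hitem) (by linarith [sum_le_sum hle])
  obtain ⟨j, hj⟩ := nonempty_of_ne_empty (mt Equiv.Perm.support_eq_empty_iff.mp hσ)
  have hmoved : trade ω₁ item σ (item j (σ j)) = σ j := by simp [trade, hitem]
  rcases h.eq_or_eq _ hopt with h₁ | h₂
  · exact Equiv.Perm.mem_support.mp hj (by rw [← hmoved, h₁, hitem])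
  · have hlt : exchangeGain v ω₁ ω₂ (item j (σ j)) (σ j) < change j := by
      simp only [exchangeGain, change, hitem, ← h₂, hmoved, or_true, if_true]
      linarith [hv (σ j) (item j (σ j))]
    linarith [sum_lt_sum hle ⟨j, hj, hlt⟩, h.left.2 _ hopt.1]

theorem OptimalPair.exists_potential (hk : ∀ i, 1 ≤ k i) (hv : ∀ i x, 0 < v i x)
    (h : OptimalPair k v ω₁ ω₂) :
    ∃ Δ : I → ℝ, ∃ ε > 0, ∀ y i, Δ (ω₁ y) + exchangeGain v ω₁ ω₂ y i + ε ≤ Δ i := by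
  have hne : ∀ j, (bundles ω₁ j).Nonempty := fun j => card_pos.mp (h.left.1 j ▸ hk j)
  choose item hitem hmax using fun j i =>
    exists_max_image (bundles ω₁ j) (fun y => exchangeGain v ω₁ ω₂ y i) (hne j)
  simp only [mem_bundles] at hitem
  obtain ⟨Δ, hΔ⟩ := exists_potential_of_sum_support_neg
    (fun j i => exchangeGain v ω₁ ω₂ (item j i) i)
    (fun j => by simp only [exchangeGain, hitem, true_or, if_true]; linarith [hv j (item j j)])
    (fun σ hσ => h.sum_support_exchangeGain_neg hv hitem hσ)
  obtain ⟨ε, hε, hΔε⟩ := exists_pos_forall_add_le (ι := I × I) fun q => hΔ q.1 q.2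
  exact ⟨Δ, ε, hε, fun y i => by
    linarith [hmax (ω₁ y) i y (mem_bundles.mpr rfl), hΔε (ω₁ y, i)]⟩

theorem OptimalPair.exists_prices (hk : ∀ i, 1 ≤ k i) (hv : ∀ i x, 0 < v i x)
    (h : OptimalPair k v ω₁ ω₂) :
    ∃ p : X → ℝ, (∀ x, 0 < p x) ∧
      ∀ i S, InDemand (k i) (v i) p S → S = bundles ω₁ i ∨ S = bundles ω₂ i := by
  obtain ⟨Δ, ε, hε, hΔ⟩ := h.exists_potential hk hv
  choose give hgive₁ hgive₂ using fun i =>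
    exists_mem_imp_of_nonempty (card_pos.mp (h.left.1 i ▸ hk i)) fun a => ω₁ a ≠ ω₂ a
  set m := ⨅ i, Δ i
  have hm : ∀ i, m ≤ Δ i := ciInf_le (Set.finite_range Δ).bddBelow
  have hlow : ∀ y, Δ (ω₁ y) - v (ω₁ y) y + ε ≤ m := fun y =>
    have : Nonempty I := ⟨ω₁ y⟩
    le_ciInf fun i => by linarith [hΔ y i, neg_le_exchangeGain (ω₁ := ω₁) (ω₂ := ω₂) hv y i]
  set surcharge : X → ℝ := fun x => if x = give (ω₁ x) then ε / 3 else 0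
  have hsurcharge : ∀ x, 0 ≤ surcharge x := fun x => by
    unfold surcharge
    split_ifs <;> linarith
  set p : X → ℝ := fun x => v (ω₁ x) x - Δ (ω₁ x) + m - 2 * ε / 3 + surcharge x
  have hp : ∀ x, 0 < p x := fun x => by
    simp only [p]
    linarith [hlow x, hsurcharge x]
  refine ⟨p, hp, fun i S hS => ?_⟩
  have hua : v i (give i) - p (give i) = Δ i - m + ε / 3 := by
    simp only [p, surcharge, mem_bundles.mp (hgive₁ i), if_true]
    ring
  refine h.inDemand_eq_bundles hp (hgive₁ i) (hgive₂ i) ?_ ?_ ?_ hS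
  · linarith [hm i]
  · intro x hx hxa
    simp only [p, surcharge, mem_bundles.mp hx, hxa, if_false, hua]
    linarith
  · intro y hy₁ hy₂
    have := hΔ y i
    simp only [exchangeGain, hy₁, hy₂, or_self, if_false] at this
    simp only [hua, p]
    linarith [hsurcharge y]

end Prices

theorem exists_dynamic_pricing_two_optimal_allocations_general
    {X I : Type*} [Fintype X] [DecidableEq X] [Fintype I] [DecidableEq I]
    (k : I → ℕ) (hk : ∀ i, 1 ≤ k i)
    (v : I → X → ℝ) (hv : ∀ i x, 0 < v i x)
    (hex : ∃ O : I → Finset X, IsAllocation k O)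
    (htwo : ∀ O₁ O₂ O₃ : I → Finset X,
      IsOptimal v k O₁ → IsOptimal v k O₂ → IsOptimal v k O₃ →
      O₁ = O₂ ∨ O₁ = O₃ ∨ O₂ = O₃) :
    ∃ p : X → ℝ, (∀ x, 0 < p x) ∧
      ∀ i, ∀ S : Finset X,
        (∀ S' : Finset X,
          bundleValue (k i) (v i) S' - ∑ x ∈ S', p x ≤
            bundleValue (k i) (v i) S - ∑ x ∈ S, p x) →
        ∃ O : I → Finset X, IsOptimal v k O ∧ O i = S := by
  have hv₀ : ∀ i x, 0 ≤ v i x := fun i x => (hv i x).le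
  obtain ⟨ω₁, ω₂, h⟩ := exists_optimalPair hv₀ hex htwo
  obtain ⟨p, hp, hdemand⟩ := h.exists_prices hk hv
  refine ⟨p, hp, fun i S hS => ?_⟩
  rcases hdemand i S hS with rfl | rfl
  · exact ⟨bundles ω₁, (isOptimal_bundles_iff hv₀).mpr h.left, rfl⟩
  · exact ⟨bundles ω₂, (isOptimal_bundles_iff hv₀).mpr h.right, rfl⟩

/-- Every multi-demand market with strictly positive item valuations that has at most
two optimal allocations admits a dynamic pricing. -/
theorem exists_dynamic_pricing_two_optimal_allocations
    {X I : Type*} [Fintype X] [DecidableEq X] [Fintype I] [DecidableEq I]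
    (k : I → ℕ) (hk : ∀ i, 1 ≤ k i) (hsum : ∑ i, k i = Fintype.card X)
    (v : I → X → ℝ) (hv : ∀ i x, 0 < v i x)
    (hex : ∃ O : I → Finset X, IsAllocation k O)
    (htwo : ∀ O₁ O₂ O₃ : I → Finset X,
      IsOptimal v k O₁ → IsOptimal v k O₂ → IsOptimal v k O₃ →
      O₁ = O₂ ∨ O₁ = O₃ ∨ O₂ = O₃) :
    ∃ p : X → ℝ, (∀ x, 0 < p x) ∧
      ∀ i, ∀ S : Finset X,
        (∀ S' : Finset X,
          bundleValue (k i) (v i) S' - ∑ x ∈ S', p x ≤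
            bundleValue (k i) (v i) S - ∑ x ∈ S, p x) →
        ∃ O : I → Finset X, IsOptimal v k O ∧ O i = S :=
  exists_dynamic_pricing_two_optimal_allocations_general k hk v hv hex htwo
end

section
/- Let (X, I, k, 𝓛) be a tight saturated market. Suppose there are items x₁ ≠ x₂ and players i₁, i₂ with x₁ ∈ 𝓛(i₁) and x₂ ∈ 𝓛(i₂) such that the assignment of x₁ to i₁ and x₂ to i₂ respects demand (i.e., if i₁ = i₂ then k_{i₁} ≥ 2) but no legal allocation O satisfies both x₁ ∈ O_{i₁} and x₂ ∈ O_{i₂}. Then there exist partitions X = X_B ⊔ X_C and I = I_B ⊔ I_C with X_B, X_C, I_B, I_C all nonempty such that: (1) ⋃_{i∈I_B} 𝓛(i) ⊆ X_B; (2) |X_B| = Σ_{i∈I_B} k_i + 1 and |X_C| = Σ_{i∈I_C} k_i − 1; and (3) the set L := X_B ∩ ⋃_{i∈I_C} 𝓛(i) has at least two elements and for every x̂ ∈ L there is a legal allocation O with ⋃_{i∈I_B} O_i = X_B ∖ {x̂} and ⋃_{i∈I_C} O_i = X_C ∪ {x̂}. -/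
set_option linter.unusedSectionVars false
set_option linter.unusedVariables false
set_option maxHeartbeats 1000000


open Finset

section Aux
variable {X I : Type*} [Fintype X] [DecidableEq X] [Fintype I] [DecidableEq I]
  {k : I → ℕ} {L : I → Finset X} {O : I → Finset X}

lemma LegalAlloc.disjoint (h : LegalAlloc k L O) {i j : I} (hij : i ≠ j) :
    Disjoint (O i) (O j) := by
  rw [Finset.disjoint_left]
  intro x hxi hxj
  exact hij ((h.2.1 x).unique hxi hxj)

lemma LegalAlloc.card_biUnion (h : LegalAlloc k L O) (S : Finset I) :
    (S.biUnion O).card = ∑ i ∈ S, k i := by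
  rw [Finset.card_biUnion (fun i _ j _ hij => h.disjoint hij)]
  exact Finset.sum_congr rfl fun i _ => h.1 i

lemma LegalAlloc.biUnion_subset_biUnionL (h : LegalAlloc k L O) (S : Finset I) :
    S.biUnion O ⊆ S.biUnion L :=
  Finset.biUnion_subset.2 fun i hi => (h.2.2 i).trans (Finset.subset_biUnion_of_mem L hi)

lemma sum_le_card_biUnion (h : LegalAlloc k L O) (S : Finset I) :
    ∑ i ∈ S, k i ≤ (S.biUnion L).card :=
  (h.card_biUnion S) ▸ Finset.card_le_card (h.biUnion_subset_biUnionL S)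

lemma mem_of_tight (h : LegalAlloc k L O) {S : Finset I}
    (ht : ∑ i ∈ S, k i = (S.biUnion L).card) {x : X} {i : I}
    (hxN : x ∈ S.biUnion L) (hxO : x ∈ O i) : i ∈ S := by
  have heq : S.biUnion O = S.biUnion L :=
    Finset.eq_of_subset_of_card_le (h.biUnion_subset_biUnionL S)
      (le_of_eq (by rw [h.card_biUnion S, ht]))
  rw [← heq, Finset.mem_biUnion] at hxN
  obtain ⟨j, hjS, hxj⟩ := hxN
  rwa [(h.2.1 x).unique hxO hxj]

lemma legalAlloc_of (hcard : ∀ i, (O i).card = k i)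
    (hdisj : ∀ i j, i ≠ j → Disjoint (O i) (O j))
    (hcover : Finset.univ.biUnion O = Finset.univ)
    (hsub : ∀ i, O i ⊆ L i) : LegalAlloc k L O := by
  refine ⟨hcard, fun x => ?_, hsub⟩
  have : x ∈ Finset.univ.biUnion O := hcover ▸ Finset.mem_univ x
  rw [Finset.mem_biUnion] at this
  obtain ⟨i, _, hxi⟩ := this
  exact ⟨i, hxi, fun j hxj => by
    by_contra hne
    exact (Finset.disjoint_left.1 (hdisj j i hne)) hxj hxi⟩

lemma legal_cover (h : LegalAlloc k L O) : Finset.univ.biUnion O = Finset.univ := by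
  apply Finset.eq_univ_of_forall
  intro x
  obtain ⟨i, hi, -⟩ := h.2.1 x
  exact Finset.mem_biUnion.2 ⟨i, Finset.mem_univ i, hi⟩

end Aux


/-- If some demand-respecting legal assignment of two items is not extendable to a
legal allocation, then the market splits into a submarket pair. -/
theorem non_extendable_pair_yields_submarket_pair
    {X I : Type*} [Fintype X] [DecidableEq X] [Fintype I] [DecidableEq I]
    (k : I → ℕ) (hk : ∀ i, 1 ≤ k i) (hsum : ∑ i, k i = Fintype.card X)
    (hI : 2 ≤ Fintype.card I)
    (L : I → Finset X)
    (htight : ∀ i, ∀ x ∈ L i, ∃ O : I → Finset X, LegalAlloc k L O ∧ x ∈ O i)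
    (x₁ x₂ : X) (hx : x₁ ≠ x₂) (i₁ i₂ : I)
    (hx₁ : x₁ ∈ L i₁) (hx₂ : x₂ ∈ L i₂)
    (hdem : i₁ = i₂ → 2 ≤ k i₁)
    (hnoext : ¬ ∃ O : I → Finset X, LegalAlloc k L O ∧ x₁ ∈ O i₁ ∧ x₂ ∈ O i₂) :
    ∃ (XB XC : Finset X) (IB IC : Finset I),
      XB ∪ XC = Finset.univ ∧ XB ∩ XC = ∅ ∧ XB.Nonempty ∧ XC.Nonempty ∧
      IB ∪ IC = Finset.univ ∧ IB ∩ IC = ∅ ∧ IB.Nonempty ∧ IC.Nonempty ∧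
      (∀ i ∈ IB, L i ⊆ XB) ∧
      XB.card = (∑ i ∈ IB, k i) + 1 ∧
      XC.card + 1 = ∑ i ∈ IC, k i ∧
      (2 ≤ (XB.filter (fun x => ∃ i ∈ IC, x ∈ L i)).card ∧
        ∀ xh ∈ XB.filter (fun x => ∃ i ∈ IC, x ∈ L i),
          ∃ O : I → Finset X, LegalAlloc k L O ∧
            IB.biUnion O = XB \ {xh} ∧ IC.biUnion O = XC ∪ {xh}) := by
  classical
  -- reduced demands
  set e : I → ℕ := fun i => (if i = i₁ then 1 else 0) + (if i = i₂ then 1 else 0) with he_def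
  have he_le : ∀ i, e i ≤ k i := by
    intro i
    simp only [he_def]
    by_cases h1 : i = i₁
    · by_cases h2 : i = i₂
      · have h12 : i₁ = i₂ := h1 ▸ h2
        have h2k := hdem h12
        have hkk : k i = k i₁ := by rw [h1]
        simp only [if_pos h1, if_pos h2]
        omega
      · have h12 : ¬ i₁ = i₂ := fun hh => h2 (h1.trans hh)
        have hkk := hk i
        simp only [if_pos h1, if_neg h2]
        omega
    · by_cases h2 : i = i₂
      · have hkk := hk i
        simp only [if_neg h1, if_pos h2]
        omega
      · simp [h1, h2]
  set k' : I → ℕ := fun i => k i - e i with hk'_def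
  have hsum_e : ∀ S : Finset I, ∑ i ∈ S, e i
      = (if i₁ ∈ S then 1 else 0) + (if i₂ ∈ S then 1 else 0) := by
    intro S
    simp only [he_def, Finset.sum_add_distrib, Finset.sum_ite_eq' S]
  have hsum_k' : ∀ S : Finset I, ∑ i ∈ S, k' i + ∑ i ∈ S, e i = ∑ i ∈ S, k i := by
    intro S
    rw [← Finset.sum_add_distrib]
    exact Finset.sum_congr rfl fun i _ => Nat.sub_add_cancel (he_le i)
  -- Step 1: a Hall violator exists for the reduced market
  have hviol : ∃ S : Finset I,
      (S.biUnion (fun i => L i \ {x₁, x₂})).card < ∑ i ∈ S, k' i := by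
    by_contra hHall
    push_neg at hHall
    -- build a legal allocation with x₁ ∈ O i₁, x₂ ∈ O i₂ via Hall's theorem
    set t : (Σ i : I, Fin (k' i)) → Finset X := fun p => L p.1 \ {x₁, x₂} with ht_def
    have hHall' : ∀ s : Finset (Σ i : I, Fin (k' i)), s.card ≤ (s.biUnion t).card := by
      intro s
      have h1 : s.card ≤ ∑ i ∈ s.image Sigma.fst, k' i := by
        have hsub : s ⊆ (s.image Sigma.fst).sigma (fun i => (Finset.univ : Finset (Fin (k' i)))) := by
          intro p hp
          exact Finset.mem_sigma.2 ⟨Finset.mem_image_of_mem Sigma.fst hp, Finset.mem_univ _⟩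
        calc s.card ≤ _ := Finset.card_le_card hsub
          _ = ∑ i ∈ s.image Sigma.fst, k' i := by
            rw [Finset.card_sigma]
            simp
      have h2 : (s.image Sigma.fst).biUnion (fun i => L i \ {x₁, x₂}) = s.biUnion t := by
        ext x
        simp only [Finset.mem_biUnion, Finset.mem_image, ht_def]
        constructor
        · rintro ⟨i, ⟨p, hp, rfl⟩, hxl⟩
          exact ⟨p, hp, hxl⟩
        · rintro ⟨p, hp, hxl⟩
          exact ⟨p.1, ⟨p, hp, rfl⟩, hxl⟩
      calc s.card ≤ ∑ i ∈ s.image Sigma.fst, k' i := h1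
        _ ≤ ((s.image Sigma.fst).biUnion (fun i => L i \ {x₁, x₂})).card := hHall _
        _ = (s.biUnion t).card := by rw [h2]
    obtain ⟨f, hfinj, hfmem⟩ := (Finset.all_card_le_biUnion_card_iff_exists_injective t).1 hHall'
    -- the partial allocation
    set O' : I → Finset X := fun i =>
      (Finset.univ : Finset (Fin (k' i))).image (fun j => f ⟨i, j⟩) with hO'_def
    have hO'card : ∀ i, (O' i).card = k' i := by
      intro i
      rw [hO'_def]
      rw [Finset.card_image_of_injective _ (fun a b hab => by
        have := hfinj hab
        simpa using this)]
      simp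
    have hO'mem : ∀ i x, x ∈ O' i → x ∈ L i \ {x₁, x₂} := by
      intro i x hxi
      simp only [hO'_def, Finset.mem_image] at hxi
      obtain ⟨j, -, rfl⟩ := hxi
      exact hfmem ⟨i, j⟩
    have hO'disj : ∀ i j, i ≠ j → Disjoint (O' i) (O' j) := by
      intro i j hij
      rw [Finset.disjoint_left]
      intro x hxi hxj
      simp only [hO'_def, Finset.mem_image] at hxi hxj
      obtain ⟨a, -, ha⟩ := hxi
      obtain ⟨b, -, hb⟩ := hxj
      have := hfinj (ha.trans hb.symm)
      exact hij (congrArg Sigma.fst this)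
    -- total size of reduced demands
    have hsum_k'_univ : ∑ i, k' i + 2 = Fintype.card X := by
      have := hsum_k' Finset.univ
      rw [hsum_e Finset.univ] at this
      simp at this
      omega
    -- coverage of X \ {x₁, x₂}
    have hcov' : Finset.univ.biUnion O' = Finset.univ \ {x₁, x₂} := by
      apply Finset.eq_of_subset_of_card_le
      · intro x hxu
        rw [Finset.mem_biUnion] at hxu
        obtain ⟨i, -, hxi⟩ := hxu
        have := hO'mem i x hxi
        rw [Finset.mem_sdiff] at this ⊢
        exact ⟨Finset.mem_univ x, this.2⟩
      · have hc1 : (Finset.univ.biUnion O').card = ∑ i, k' i := by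
          rw [Finset.card_biUnion (fun i _ j _ hij => hO'disj i j hij)]
          exact Finset.sum_congr rfl fun i _ => hO'card i
        have hc2 : (Finset.univ \ ({x₁, x₂} : Finset X)).card = Fintype.card X - 2 := by
          rw [Finset.card_sdiff_of_subset (by simp)]
          simp [Finset.card_univ, Finset.card_pair hx]
        omega
    -- extend to a full allocation
    set O : I → Finset X := fun i =>
      O' i ∪ ((if i = i₁ then {x₁} else ∅) ∪ (if i = i₂ then {x₂} else ∅)) with hO_def
    have hOmem : ∀ i x, x ∈ O i ↔ x ∈ O' i ∨ (i = i₁ ∧ x = x₁) ∨ (i = i₂ ∧ x = x₂) := by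
      intro i x
      simp only [hO_def, Finset.mem_union]
      constructor
      · rintro (h | h | h)
        · exact Or.inl h
        · by_cases h1 : i = i₁
          · simp [h1] at h; exact Or.inr (Or.inl ⟨h1, h⟩)
          · simp [h1] at h
        · by_cases h2 : i = i₂
          · simp [h2] at h; exact Or.inr (Or.inr ⟨h2, h⟩)
          · simp [h2] at h
      · rintro (h | ⟨rfl, rfl⟩ | ⟨rfl, rfl⟩)
        · exact Or.inl h
        · simp
        · simp
    have hO'x : ∀ i, x₁ ∉ O' i ∧ x₂ ∉ O' i := by
      intro i
      constructor <;> intro hmem <;> have := hO'mem i _ hmem <;> simp at this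
    have hOcard : ∀ i, (O i).card = k i := by
      intro i
      have hdisjx : Disjoint (O' i) ((if i = i₁ then {x₁} else ∅) ∪ (if i = i₂ then {x₂} else ∅)) := by
        rw [Finset.disjoint_right]
        intro x hxe hxo
        rw [Finset.mem_union] at hxe
        rcases hxe with h | h
        · by_cases h1 : i = i₁
          · simp [h1] at h; subst h; exact (hO'x i).1 hxo
          · simp [h1] at h
        · by_cases h2 : i = i₂
          · simp [h2] at h; subst h; exact (hO'x i).2 hxo
          · simp [h2] at h
      rw [hO_def]
      simp only
      rw [Finset.card_union_of_disjoint hdisjx, hO'card i]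
      have hcard_e : ((if i = i₁ then {x₁} else ∅) ∪ (if i = i₂ then {x₂} else (∅ : Finset X))).card = e i := by
        by_cases h1 : i = i₁ <;> by_cases h2 : i = i₂
        · have h12 : i₁ = i₂ := h1 ▸ h2
          simp only [he_def, if_pos h1, if_pos h2, if_pos h12]
          have hu : ({x₁} ∪ {x₂} : Finset X) = {x₁, x₂} := by ext y; simp
          rw [hu, Finset.card_pair hx]
        · have h12 : ¬ i₁ = i₂ := fun hh => h2 (h1.trans hh)
          simp [he_def, h1, h2, h12]
        · have h12 : ¬ i₂ = i₁ := fun hh => h1 (h2.trans hh)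
          simp [he_def, h1, h2, h12]
        · simp [he_def, h1, h2]
      rw [hcard_e, hk'_def]
      simp only
      exact Nat.sub_add_cancel (he_le i)
    have hOdisj : ∀ i j, i ≠ j → Disjoint (O i) (O j) := by
      intro i j hij
      rw [Finset.disjoint_left]
      intro x hxi hxj
      rw [hOmem] at hxi hxj
      rcases hxi with h | ⟨hi1, hxa⟩ | ⟨hi2, hxa⟩ <;>
        rcases hxj with h' | ⟨hj1, hxb⟩ | ⟨hj2, hxb⟩
      · exact Finset.disjoint_left.1 (hO'disj i j hij) h h'
      · exact (hO'x i).1 (hxb ▸ h)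
      · exact (hO'x i).2 (hxb ▸ h)
      · exact (hO'x j).1 (hxa ▸ h')
      · exact hij (hi1.trans hj1.symm)
      · exact hx (hxa.symm.trans hxb)
      · exact (hO'x j).2 (hxa ▸ h')
      · exact hx (hxb.symm.trans hxa)
      · exact hij (hi2.trans hj2.symm)
    have hOcov : Finset.univ.biUnion O = Finset.univ := by
      apply Finset.eq_univ_of_forall
      intro x
      rw [Finset.mem_biUnion]
      by_cases hx1 : x = x₁
      · exact ⟨i₁, Finset.mem_univ _, (hOmem i₁ x).2 (Or.inr (Or.inl ⟨rfl, hx1⟩))⟩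
      by_cases hx2 : x = x₂
      · exact ⟨i₂, Finset.mem_univ _, (hOmem i₂ x).2 (Or.inr (Or.inr ⟨rfl, hx2⟩))⟩
      have : x ∈ Finset.univ.biUnion O' := by
        rw [hcov']
        simp [hx1, hx2]
      rw [Finset.mem_biUnion] at this
      obtain ⟨i, -, hxi⟩ := this
      exact ⟨i, Finset.mem_univ _, (hOmem i x).2 (Or.inl hxi)⟩
    have hOsub : ∀ i, O i ⊆ L i := by
      intro i x hxi
      rw [hOmem] at hxi
      rcases hxi with h | ⟨rfl, rfl⟩ | ⟨rfl, rfl⟩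
      · exact (Finset.mem_sdiff.1 (hO'mem i x h)).1
      · exact hx₁
      · exact hx₂
    exact hnoext ⟨O, legalAlloc_of hOcard hOdisj hOcov hOsub,
      (hOmem i₁ x₁).2 (Or.inr (Or.inl ⟨rfl, rfl⟩)),
      (hOmem i₂ x₂).2 (Or.inr (Or.inr ⟨rfl, rfl⟩))⟩
  -- Step 2: analyze the violator
  obtain ⟨S, hS⟩ := hviol
  set N : Finset X := S.biUnion L with hN_def
  have hN' : S.biUnion (fun i => L i \ {x₁, x₂}) = N \ {x₁, x₂} := by
    ext x
    simp [hN_def, Finset.mem_biUnion, Finset.mem_sdiff]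
    tauto
  rw [hN'] at hS
  -- an allocation exists
  obtain ⟨O₀, hO₀, -⟩ := htight i₁ x₁ hx₁
  have hF1 : ∑ i ∈ S, k i ≤ N.card := sum_le_card_biUnion hO₀ S
  -- indicator arithmetic
  set b1 : ℕ := if x₁ ∈ N then 1 else 0 with hb1
  set b2 : ℕ := if x₂ ∈ N then 1 else 0 with hb2
  set a1 : ℕ := if i₁ ∈ S then 1 else 0 with ha1
  set a2 : ℕ := if i₂ ∈ S then 1 else 0 with ha2
  have hcardN' : (N \ {x₁, x₂}).card + b1 + b2 = N.card := by
    have h12 : (N \ {x₁, x₂}) = (N.erase x₁).erase x₂ := by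
      ext y; simp [Finset.mem_sdiff, Finset.mem_erase]; tauto
    have e1 : (N.erase x₁).card + b1 = N.card := by
      by_cases h : x₁ ∈ N
      · have := Finset.card_erase_add_one h
        simp only [hb1, if_pos h]
        omega
      · simp [hb1, h, Finset.erase_eq_of_notMem h]
    have e2 : ((N.erase x₁).erase x₂).card + b2 = (N.erase x₁).card := by
      by_cases h : x₂ ∈ N
      · have h' : x₂ ∈ N.erase x₁ := Finset.mem_erase.2 ⟨fun hh => hx hh.symm, h⟩
        have := Finset.card_erase_add_one h'
        simp only [hb2, if_pos h]
        omega
      · have h' : x₂ ∉ N.erase x₁ := fun hh => h (Finset.mem_of_mem_erase hh)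
        simp [hb2, h, Finset.erase_eq_of_notMem h']
    rw [h12]
    omega
  have hsum_kS : ∑ i ∈ S, k' i + a1 + a2 = ∑ i ∈ S, k i := by
    have := hsum_k' S
    rw [hsum_e S] at this
    omega
  have hab : a1 ≤ 1 ∧ a2 ≤ 1 ∧ b1 ≤ 1 ∧ b2 ≤ 1 := by
    constructor; · by_cases h : i₁ ∈ S <;> simp [ha1, h]
    constructor; · by_cases h : i₂ ∈ S <;> simp [ha2, h]
    constructor; · by_cases h : x₁ ∈ N <;> simp [hb1, h]
    · by_cases h : x₂ ∈ N <;> simp [hb2, h]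
  -- rule out the tight case
  have hnt : ∑ i ∈ S, k i ≠ N.card := by
    intro ht
    have key : ∀ (x : X) (i : I), x ∈ L i → x ∈ N → i ∈ S := by
      intro x i hxL hxN
      obtain ⟨O, hO, hxO⟩ := htight i x hxL
      exact mem_of_tight hO ht hxN hxO
    have hb1a1 : b1 ≤ a1 := by
      by_cases h : x₁ ∈ N
      · have := key x₁ i₁ hx₁ h
        simp [hb1, ha1, h, this]
      · simp [hb1, h]
    have hb2a2 : b2 ≤ a2 := by
      by_cases h : x₂ ∈ N
      · have := key x₂ i₂ hx₂ h
        simp [hb2, ha2, h, this]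
      · simp [hb2, h]
    omega
  have hmain : ∑ i ∈ S, k i + 1 = N.card ∧ a1 = 0 ∧ a2 = 0 ∧ b1 = 1 ∧ b2 = 1 := by
    omega
  obtain ⟨hcardB, ha10, ha20, hb11, hb21⟩ := hmain
  have hi1S : i₁ ∉ S := by intro h; simp [ha1, h] at ha10
  have hi2S : i₂ ∉ S := by intro h; simp [ha2, h] at ha20
  have hx1N : x₁ ∈ N := by by_contra h; simp [hb1, h] at hb11
  have hx2N : x₂ ∈ N := by by_contra h; simp [hb2, h] at hb21
  have hSne : S.Nonempty := by
    rcases S.eq_empty_or_nonempty with rfl | h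
    · simp at hS
    · exact h
  -- assemble the answer
  refine ⟨N, Nᶜ, S, Sᶜ, Finset.union_compl N, Finset.inter_compl N, ⟨x₁, hx1N⟩, ?_,
    Finset.union_compl S, Finset.inter_compl S, hSne, ⟨i₁, Finset.mem_compl.2 hi1S⟩,
    fun i hi => Finset.subset_biUnion_of_mem L hi, hcardB.symm, ?_, ?_, ?_⟩
  · -- XC nonempty
    have hsplit : ∑ i ∈ S, k i + ∑ i ∈ Sᶜ, k i = Fintype.card X := by
      rw [Finset.sum_add_sum_compl]; exact hsum
    have h2 : 2 ≤ ∑ i ∈ Sᶜ, k i := by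
      by_cases h12 : i₁ = i₂
      · calc 2 ≤ k i₁ := hdem h12
          _ ≤ ∑ i ∈ Sᶜ, k i := Finset.single_le_sum (fun i _ => Nat.zero_le _)
            (Finset.mem_compl.2 hi1S)
      · have hsub : {i₁, i₂} ⊆ Sᶜ := by
          intro i hi
          rw [Finset.mem_insert, Finset.mem_singleton] at hi
          rcases hi with rfl | rfl
          · exact Finset.mem_compl.2 hi1S
          · exact Finset.mem_compl.2 hi2S
        calc 2 ≤ k i₁ + k i₂ := by have := hk i₁; have := hk i₂; omega
          _ = ∑ i ∈ ({i₁, i₂} : Finset I), k i := (Finset.sum_pair h12).symm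
          _ ≤ ∑ i ∈ Sᶜ, k i := Finset.sum_le_sum_of_subset hsub
    have hNc : Nᶜ.card + N.card = Fintype.card X := by
      rw [Finset.card_compl]
      have : N.card ≤ Fintype.card X := Finset.card_le_univ N
      omega
    rw [← Finset.card_pos]
    omega
  · -- XC.card + 1 = ∑ IC
    have hsplit : ∑ i ∈ S, k i + ∑ i ∈ Sᶜ, k i = Fintype.card X := by
      rw [Finset.sum_add_sum_compl]; exact hsum
    have hNc : Nᶜ.card + N.card = Fintype.card X := by
      rw [Finset.card_compl]
      have : N.card ≤ Fintype.card X := Finset.card_le_univ N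
      omega
    omega
  · -- 2 ≤ filter card
    have hsub : ({x₁, x₂} : Finset X) ⊆ N.filter (fun x => ∃ i ∈ Sᶜ, x ∈ L i) := by
      intro x hxm
      rw [Finset.mem_insert, Finset.mem_singleton] at hxm
      rw [Finset.mem_filter]
      rcases hxm with rfl | rfl
      · exact ⟨hx1N, i₁, Finset.mem_compl.2 hi1S, hx₁⟩
      · exact ⟨hx2N, i₂, Finset.mem_compl.2 hi2S, hx₂⟩
    calc 2 = ({x₁, x₂} : Finset X).card := (Finset.card_pair hx).symm
      _ ≤ _ := Finset.card_le_card hsub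
  · -- part (3)
    intro xh hxh
    rw [Finset.mem_filter] at hxh
    obtain ⟨hxhN, j, hjSc, hxhL⟩ := hxh
    rw [Finset.mem_compl] at hjSc
    obtain ⟨O, hO, hxhO⟩ := htight j xh hxhL
    have hBsub : S.biUnion O ⊆ N \ {xh} := by
      intro x hxm
      rw [Finset.mem_biUnion] at hxm
      obtain ⟨i, hiS, hxi⟩ := hxm
      rw [Finset.mem_sdiff, Finset.mem_singleton]
      refine ⟨Finset.subset_biUnion_of_mem L hiS (hO.2.2 i hxi), ?_⟩
      intro heq
      subst heq
      exact hjSc ((hO.2.1 x).unique hxhO hxi ▸ hiS)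
    have hBcard : (N \ {xh}).card ≤ (S.biUnion O).card := by
      rw [hO.card_biUnion S]
      have : (N \ {xh}).card + 1 = N.card := by
        have : N \ {xh} = N.erase xh := by ext y; simp [Finset.mem_erase]; tauto
        rw [this, Finset.card_erase_add_one hxhN]
      omega
    have hB : S.biUnion O = N \ {xh} := Finset.eq_of_subset_of_card_le hBsub hBcard
    have hC : Sᶜ.biUnion O = Nᶜ ∪ {xh} := by
      have hcompl : Sᶜ.biUnion O = Finset.univ \ S.biUnion O := by
        ext x
        simp only [Finset.mem_biUnion, Finset.mem_sdiff, Finset.mem_univ, true_and,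
          Finset.mem_compl]
        constructor
        · rintro ⟨i, hiS, hxi⟩ ⟨i', hi'S, hxi'⟩
          exact hiS ((hO.2.1 x).unique hxi hxi' ▸ hi'S)
        · intro hns
          obtain ⟨i, hxi, -⟩ := hO.2.1 x
          refine ⟨i, fun hiS => hns ⟨i, hiS, hxi⟩, hxi⟩
      rw [hcompl, hB]
      ext x
      simp only [Finset.mem_sdiff, Finset.mem_univ, true_and, Finset.mem_union,
        Finset.mem_compl, Finset.mem_singleton]
      constructor
      · intro h
        by_cases hxN : x ∈ N
        · right
          by_contra hne
          exact h ⟨hxN, hne⟩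
        · exact Or.inl hxN
      · rintro (h | rfl)
        · intro hc; exact h hc.1
        · intro hc; exact hc.2 rfl
    exact ⟨O, hO, hB, hC⟩
end
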